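/- arXiv:1503.01043 — 9 statements merged into one kernel-verified Lean document; each statement's English description precedes it below -/
import Mathlib

section
/- Let Φ be a root system with base Δ, W its Weyl group, and for S ⊆ Δ let Φ^rad(S) = Φ⁺ \ ℕ(Δ\S) be the set of positive roots that cannot be written as a nonnegative integer combination of the simple roots not in S. Then the stabilizer of Φ^rad(S) in W equals the standard parabolic subgroup W_{Δ\S} generated by the simple reflections s_α for α ∈ Δ\S. -/
set_option autoImplicit false

open Module

variable {V : Type*} [DecidableEq V] [NormedAddCommGroup V] [InnerProductSpace ℝ V] [FiniteDimensional ℝ V]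

/-- The orthogonal reflection `s_α` in the hyperplane orthogonal to `α`, as a linear
automorphism of `V`. -/
noncomputable def simpleReflection (α : V) : V ≃ₗ[ℝ] V :=
  (Submodule.reflection ((Submodule.span ℝ {α})ᗮ)).toLinearEquiv

/-- `x` is a nonnegative integer combination of the elements of `Δ`. -/
def IsNNComb (Δ : Finset V) (x : V) : Prop :=
  ∃ c : V → ℕ, x = ∑ a ∈ Δ, (c a : ℝ) • a

/-- The positive roots of `Φ` with respect to the base `Δ`. -/
def posRoots (Φ : Set V) (Δ : Finset V) : Set V := {γ ∈ Φ | IsNNComb Δ γ}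

/-- `Φ^rad(S)`: the positive roots that are not nonnegative integer combinations of the
simple roots not in `S`. -/
def phiRad (Φ : Set V) (Δ S : Finset V) : Set V :=
  {γ ∈ posRoots Φ Δ | ¬ IsNNComb (Δ \ S) γ}

/-- The subgroup of `GL(V)` generated by the reflections `s_α` for `α ∈ I`; for `I = Δ`
this is the Weyl group `W`, and for `I ⊆ Δ` it is the standard parabolic subgroup `W_I`. -/
noncomputable def weylSubgroup (I : Finset V) : Subgroup (V ≃ₗ[ℝ] V) :=
  Subgroup.closure {w | ∃ α ∈ I, w = simpleReflection α}


/-!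
Let `x` be the sum of the roots in `Φ^rad(S)`; every `w` stabilizing `Φ^rad(S)` fixes `x`.
For `α ∈ Δ \ S` the reflection `s_α` permutes `Φ^rad(S)`, so `⟪x, α⟫ = 0`. For `α ∈ S`, the roots
`γ ∈ Φ^rad(S)` with `s_α γ ∈ Φ^rad(S)` cancel in pairs in `⟪x, α⟫`; any other `γ` has
`⟪γ, α⟫ ≥ 0`, since otherwise `s_α γ` would have a larger `α`-coefficient than `γ` and stay in
`Φ^rad(S)`; and `α` itself is such a root. Hence `x` is dominant and the simple roots orthogonal
to it are exactly `Δ \ S`. The stabilizer of a dominant vector is generated by the simple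
reflections fixing it: peel off the last letter `β` of a word for `w`; either the remaining word
sends `β` to a negative root and the exchange property shortens the word, or `w β < 0`, which
forces `⟪x, β⟫ = 0`.
-/

open scoped RealInnerProductSpace Pointwise

variable {E : Type*} [NormedAddCommGroup E] [InnerProductSpace ℝ E]

lemma simpleReflection_apply (α x : E) :
    simpleReflection α x = x - (2 * ⟪α, x⟫ / ‖α‖ ^ 2) • α := by
  show Submodule.reflection ((Submodule.span ℝ {α})ᗮ) x = _
  rw [Submodule.reflection_apply, Submodule.starProjection_orthogonal_val,
    Submodule.starProjection_singleton]
  simp only [RCLike.ofReal_real_eq_id, id_eq]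
  module

lemma LinearMap.apply_simpleReflection (f : E →ₗ[ℝ] ℝ) (α x : E) :
    f (simpleReflection α x) = f x - 2 * ⟪α, x⟫ / ‖α‖ ^ 2 * f α := by
  rw [simpleReflection_apply, map_sub, map_smul, smul_eq_mul]

lemma simpleReflection_involutive (α : E) : Function.Involutive (simpleReflection α) :=
  Submodule.reflection_reflection _

lemma simpleReflection_mul_self (α : E) : simpleReflection α * simpleReflection α = 1 :=
  LinearEquiv.ext (simpleReflection_involutive α)

lemma simpleReflection_inv (α : E) : (simpleReflection α)⁻¹ = simpleReflection α :=
  inv_eq_of_mul_eq_one_right (simpleReflection_mul_self α)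

lemma simpleReflection_apply_self (α : E) : simpleReflection α α = -α :=
  Submodule.reflection_orthogonalComplement_singleton_eq_neg α

lemma simpleReflection_apply_eq_self_iff {α x : E} :
    simpleReflection α x = x ↔ ⟪α, x⟫ = 0 :=
  (Submodule.reflection_eq_self_iff x).trans Submodule.mem_orthogonal_singleton_iff_inner_right

lemma inner_simpleReflection_simpleReflection (α x y : E) :
    ⟪simpleReflection α x, simpleReflection α y⟫ = ⟪x, y⟫ :=
  (Submodule.reflection _).inner_map_map x y

lemma inner_simpleReflection_self (α x : E) : ⟪simpleReflection α x, α⟫ = -⟪x, α⟫ := by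
  rw [← inner_simpleReflection_simpleReflection α, simpleReflection_involutive,
    simpleReflection_apply_self, inner_neg_right]

lemma simpleReflection_smul (α : E) {t : ℝ} (ht : t ≠ 0) :
    simpleReflection (t • α) = simpleReflection α := by
  simp only [simpleReflection, Submodule.span_singleton_smul_eq (IsUnit.mk0 t ht)]

lemma mul_simpleReflection_mul_inv {w : E ≃ₗ[ℝ] E} (hw : ∀ x y, ⟪w x, w y⟫ = ⟪x, y⟫) (β : E) :
    w * simpleReflection β * w⁻¹ = simpleReflection (w β) := by
  ext x
  have hx : w (w⁻¹ x) = x := w.apply_symm_apply x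
  have hβx : ⟪β, w⁻¹ x⟫ = ⟪w β, x⟫ := by rw [← hw, hx]
  have hββ : ‖β‖ = ‖w β‖ := by
    rw [norm_eq_sqrt_re_inner (𝕜 := ℝ), norm_eq_sqrt_re_inner (𝕜 := ℝ), hw]
  simp only [LinearEquiv.mul_apply, simpleReflection_apply, map_sub, map_smul, hx, hβx, hββ]

lemma inner_sum_pos_of_simpleReflection {T : Finset E} {α : E} (hα : α ∈ T) (hnα : -α ∉ T)
    (h : ∀ γ ∈ T, simpleReflection α γ ∉ T → 0 ≤ ⟪γ, α⟫) : 0 < ⟪∑ γ ∈ T, γ, α⟫ := by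
  classical
  have hα0 : α ≠ 0 := by rintro rfl; exact hnα (by simpa using hα)
  rw [sum_inner, ← Finset.sum_filter_add_sum_filter_not T (fun γ => simpleReflection α γ ∈ T)]
  have hpaired : ∑ γ ∈ T with simpleReflection α γ ∈ T, ⟪γ, α⟫ = 0 := by
    refine Finset.sum_involution (fun γ _ => simpleReflection α γ)
      (fun γ _ => by rw [inner_simpleReflection_self, add_neg_cancel])
      (fun γ _ hγ hfix => hγ ?_) (fun γ hγ => ?_) (fun γ _ => simpleReflection_involutive α γ)
    · rw [real_inner_comm]
      exact simpleReflection_apply_eq_self_iff.mp hfix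
    · rw [Finset.mem_filter] at hγ ⊢
      exact ⟨hγ.2, by rw [simpleReflection_involutive]; exact hγ.1⟩
  rw [hpaired, zero_add]
  exact Finset.sum_pos' (fun γ hγ => h γ (Finset.mem_filter.mp hγ).1 (Finset.mem_filter.mp hγ).2)
    ⟨α, Finset.mem_filter.mpr ⟨hα, by rwa [simpleReflection_apply_self]⟩,
      real_inner_self_pos.mpr hα0⟩

lemma apply_sum_eq_of_image_eq {T : Finset E} {w : E ≃ₗ[ℝ] E}
    (h : (fun x => w x) '' ↑T = ↑T) : w (∑ γ ∈ T, γ) = ∑ γ ∈ T, γ := by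
  rw [map_sum]
  exact Finset.sum_nbij w (fun γ hγ => by rw [← Finset.mem_coe, ← h]; exact ⟨γ, hγ, rfl⟩)
    w.injective.injOn (by rw [Set.SurjOn, h]) fun _ _ => rfl

lemma simpleReflection_mem_weylSubgroup {I : Finset E} {α : E} (hα : α ∈ I) :
    simpleReflection α ∈ weylSubgroup I :=
  Subgroup.subset_closure ⟨α, hα, rfl⟩

lemma weylSubgroup_mono {I J : Finset E} (h : I ⊆ J) : weylSubgroup I ≤ weylSubgroup J :=
  Subgroup.closure_mono fun _ ⟨α, hα, hw⟩ => ⟨α, h hα, hw⟩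

noncomputable def wordProd (l : List E) : E ≃ₗ[ℝ] E := (l.map simpleReflection).prod

@[simp] lemma wordProd_nil : wordProd ([] : List E) = 1 := rfl

@[simp] lemma wordProd_cons (α : E) (l : List E) :
    wordProd (α :: l) = simpleReflection α * wordProd l := by
  simp [wordProd]

@[simp] lemma wordProd_append (l l' : List E) :
    wordProd (l ++ l') = wordProd l * wordProd l' := by
  simp [wordProd]

@[simp] lemma wordProd_singleton (α : E) : wordProd [α] = simpleReflection α := by
  simp [wordProd]

lemma inner_wordProd (l : List E) (x y : E) : ⟪wordProd l x, wordProd l y⟫ = ⟪x, y⟫ := by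
  induction l with
  | nil => rfl
  | cons α l ih => rw [wordProd_cons, LinearEquiv.mul_apply, LinearEquiv.mul_apply,
      inner_simpleReflection_simpleReflection, ih]

lemma exists_wordProd_eq_of_mem_weylSubgroup {I : Finset E} {w : E ≃ₗ[ℝ] E}
    (hw : w ∈ weylSubgroup I) : ∃ l : List E, (∀ a ∈ l, a ∈ I) ∧ wordProd l = w := by
  induction hw using Subgroup.closure_induction'' with
  | mem w hw | inv_mem w hw =>
    obtain ⟨α, hα, rfl⟩ := hw
    exact ⟨[α], by simpa using hα, by simp [simpleReflection_inv]⟩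
  | one => exact ⟨[], by simp, rfl⟩
  | mul u v _ _ hu hv =>
    obtain ⟨l, hl, rfl⟩ := hu
    obtain ⟨l', hl', rfl⟩ := hv
    exact ⟨l ++ l', fun a ha => (List.mem_append.mp ha).elim (hl a) (hl' a), wordProd_append l l'⟩

section Coordinates

variable [DecidableEq E]

/-- Only the values on `Δ` are prescribed, so such an `f` is not unique. -/
def IsCoord (Δ : Finset E) (b : E) (f : E →ₗ[ℝ] ℝ) : Prop :=
  ∀ a ∈ Δ, f a = if a = b then 1 else 0

lemma exists_isCoord {Δ : Finset E} (hind : LinearIndependent ℝ (fun a : Δ => (a : E))) {b : E}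
    (hb : b ∈ Δ) : ∃ f, IsCoord Δ b f := by
  have hs : LinearIndepOn ℝ id (Δ : Set E) := hind
  let B := Basis.extend hs
  refine ⟨B.coord ⟨b, hs.subset_extend _ hb⟩, fun a ha => ?_⟩
  calc B.coord ⟨b, hs.subset_extend _ hb⟩ a
      = B.coord ⟨b, hs.subset_extend _ hb⟩ (B ⟨a, hs.subset_extend _ ha⟩) := by
        rw [Basis.extend_apply_self]
    _ = _ := by simp [Basis.coord_apply, Basis.repr_self, Finsupp.single_apply]

variable {Δ : Finset E} {b : E} {f : E →ₗ[ℝ] ℝ}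

lemma IsCoord.nonneg (hf : IsCoord Δ b f) : ∀ a ∈ Δ, 0 ≤ f a := fun a ha => by
  rw [hf a ha]
  split_ifs <;> norm_num

lemma IsCoord.apply_sum (hf : IsCoord Δ b f) (hb : b ∈ Δ) (c : E → ℝ) :
    f (∑ a ∈ Δ, c a • a) = c b := by
  rw [map_sum, Finset.sum_eq_single_of_mem b hb fun a ha hab => by
    rw [map_smul, hf a ha, if_neg hab, smul_zero], map_smul, hf b hb, if_pos rfl, smul_eq_mul,
    mul_one]

lemma IsCoord.apply_sdiff {S : Finset E} (hf : IsCoord Δ b f) (hb : b ∈ S) :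
    ∀ a ∈ Δ \ S, f a = 0 := fun a ha => by
  rw [Finset.mem_sdiff] at ha
  rw [hf a ha.1, if_neg (ne_of_mem_of_not_mem hb ha.2).symm]

lemma IsCoord.apply_simpleReflection (hf : IsCoord Δ b f) {α : E} (hα : α ∈ Δ) (hαb : α ≠ b)
    (x : E) : f (simpleReflection α x) = f x := by
  rw [f.apply_simpleReflection, hf α hα, if_neg hαb, mul_zero, sub_zero]

end Coordinates

lemma isNNComb_self {J : Finset E} {α : E} (hα : α ∈ J) : IsNNComb J α := by
  classical
  exact ⟨fun a => if a = α then 1 else 0, by simp [Finset.sum_ite_eq', hα]⟩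

lemma IsNNComb.nonneg {J : Finset E} {x : E} (hx : IsNNComb J x) {f : E →ₗ[ℝ] ℝ}
    (hf : ∀ a ∈ J, 0 ≤ f a) : 0 ≤ f x := by
  obtain ⟨c, rfl⟩ := hx
  simp only [map_sum, map_smul, smul_eq_mul]
  exact Finset.sum_nonneg fun a ha => mul_nonneg (Nat.cast_nonneg _) (hf a ha)

lemma IsNNComb.apply_eq_zero {J : Finset E} {x : E} (hx : IsNNComb J x) {f : E →ₗ[ℝ] ℝ}
    (hf : ∀ a ∈ J, f a = 0) : f x = 0 := by
  obtain ⟨c, rfl⟩ := hx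
  simp only [map_sum, map_smul]
  exact Finset.sum_eq_zero fun a ha => by rw [hf a ha, smul_zero]

lemma IsNNComb.exists_isCoord_pos [DecidableEq E] {Δ J : Finset E}
    (hind : LinearIndependent ℝ (fun a : Δ => (a : E))) (hJ : J ⊆ Δ) {x : E}
    (hx : IsNNComb Δ x) (hxJ : ¬ IsNNComb J x) :
    ∃ b ∈ Δ, b ∉ J ∧ ∃ f, IsCoord Δ b f ∧ 0 < f x := by
  obtain ⟨c, rfl⟩ := hx
  by_contra! hcon
  refine hxJ ⟨c, (Finset.sum_subset hJ fun b hbΔ hbJ => ?_).symm⟩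
  obtain ⟨f, hf⟩ := exists_isCoord hind hbΔ
  have hcb := hcon b hbΔ hbJ f hf
  rw [hf.apply_sum hbΔ] at hcb
  rw [show c b = 0 by exact_mod_cast hcb.antisymm (Nat.cast_nonneg _), Nat.cast_zero, zero_smul]

lemma IsNNComb.eq_zero_of_neg {Δ : Finset E} (hind : LinearIndependent ℝ (fun a : Δ => (a : E)))
    {x : E} (hx : IsNNComb Δ x) (hnx : IsNNComb Δ (-x)) : x = 0 := by
  classical
  by_contra hx0
  obtain ⟨b, -, -, f, hf, hfx⟩ :=
    hx.exists_isCoord_pos hind (Finset.empty_subset Δ) fun ⟨c, hc⟩ => hx0 (by simpa using hc)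
  have := hnx.nonneg hf.nonneg
  rw [map_neg] at this
  linarith

section Roots

variable {Φ : Set E} {Δ : Finset E}

lemma mem_posRoots_of_pos (hbase : ∀ γ ∈ Φ, IsNNComb Δ γ ∨ IsNNComb Δ (-γ))
    {f : E →ₗ[ℝ] ℝ} (hf : ∀ a ∈ Δ, 0 ≤ f a) {γ : E} (hγ : γ ∈ Φ) (hfγ : 0 < f γ) :
    γ ∈ posRoots Φ Δ :=
  ⟨hγ, (hbase γ hγ).resolve_right fun h => by
    have := h.nonneg hf
    rw [map_neg] at this
    linarith⟩

lemma neg_notMem_posRoots (h0 : (0 : E) ∉ Φ)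
    (hind : LinearIndependent ℝ (fun a : Δ => (a : E))) {γ : E} (hγ : γ ∈ posRoots Φ Δ) :
    -γ ∉ posRoots Φ Δ := fun h =>
  h0 (hγ.2.eq_zero_of_neg hind h.2 ▸ hγ.1)

lemma simpleReflection_mem_posRoots (hind : LinearIndependent ℝ (fun a : Δ => (a : E)))
    (hbase : ∀ γ ∈ Φ, IsNNComb Δ γ ∨ IsNNComb Δ (-γ))
    (hinv : ∀ w ∈ weylSubgroup Δ, ∀ γ ∈ Φ, w γ ∈ Φ) {α γ : E} (hα : α ∈ Δ)
    (hγ : γ ∈ posRoots Φ Δ) (hγα : ¬ IsNNComb {α} γ) :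
    simpleReflection α γ ∈ posRoots Φ Δ := by
  classical
  obtain ⟨b, -, hbα, f, hf, hfγ⟩ :=
    hγ.2.exists_isCoord_pos hind (Finset.singleton_subset_iff.mpr hα) hγα
  refine mem_posRoots_of_pos hbase hf.nonneg
    (hinv _ (simpleReflection_mem_weylSubgroup hα) γ hγ.1) ?_
  rwa [hf.apply_simpleReflection hα (Ne.symm (Finset.notMem_singleton.mp hbα))]

variable [DecidableEq E] {S : Finset E}

lemma mem_phiRad_of_pos (hbase : ∀ γ ∈ Φ, IsNNComb Δ γ ∨ IsNNComb Δ (-γ))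
    {f : E →ₗ[ℝ] ℝ} (hf : ∀ a ∈ Δ, 0 ≤ f a) (hfS : ∀ a ∈ Δ \ S, f a = 0) {γ : E} (hγ : γ ∈ Φ)
    (hfγ : 0 < f γ) : γ ∈ phiRad Φ Δ S :=
  ⟨mem_posRoots_of_pos hbase hf hγ hfγ, fun h => hfγ.ne' (h.apply_eq_zero hfS)⟩

lemma mem_phiRad_of_mem (hΔΦ : ↑Δ ⊆ Φ) (hind : LinearIndependent ℝ (fun a : Δ => (a : E)))
    {α : E} (hα : α ∈ Δ) (hαS : α ∈ S) : α ∈ phiRad Φ Δ S := by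
  obtain ⟨f, hf⟩ := exists_isCoord hind hα
  refine ⟨⟨hΔΦ hα, isNNComb_self hα⟩, fun h => ?_⟩
  have := h.apply_eq_zero (hf.apply_sdiff hαS)
  rw [hf α hα, if_pos rfl] at this
  exact one_ne_zero this

lemma simpleReflection_mem_phiRad (hind : LinearIndependent ℝ (fun a : Δ => (a : E)))
    (hbase : ∀ γ ∈ Φ, IsNNComb Δ γ ∨ IsNNComb Δ (-γ))
    (hinv : ∀ w ∈ weylSubgroup Δ, ∀ γ ∈ Φ, w γ ∈ Φ) {α γ : E} (hα : α ∈ Δ \ S)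
    (hγ : γ ∈ phiRad Φ Δ S) : simpleReflection α γ ∈ phiRad Φ Δ S := by
  obtain ⟨hαΔ, hαS⟩ := Finset.mem_sdiff.mp hα
  obtain ⟨b, hbΔ, hbS, f, hf, hfγ⟩ := hγ.1.2.exists_isCoord_pos hind Finset.sdiff_subset hγ.2
  have hbS : b ∈ S := by simpa [hbΔ] using hbS
  refine mem_phiRad_of_pos hbase hf.nonneg (hf.apply_sdiff hbS)
    (hinv _ (simpleReflection_mem_weylSubgroup hαΔ) γ hγ.1.1) ?_
  rwa [hf.apply_simpleReflection hαΔ (ne_of_mem_of_not_mem hbS hαS).symm]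

lemma simpleReflection_mem_phiRad_of_inner_neg
    (hind : LinearIndependent ℝ (fun a : Δ => (a : E)))
    (hbase : ∀ γ ∈ Φ, IsNNComb Δ γ ∨ IsNNComb Δ (-γ))
    (hinv : ∀ w ∈ weylSubgroup Δ, ∀ γ ∈ Φ, w γ ∈ Φ) {α γ : E} (hα : α ∈ Δ) (hαS : α ∈ S)
    (hγ : γ ∈ phiRad Φ Δ S) (hγα : ⟪γ, α⟫ < 0) : simpleReflection α γ ∈ phiRad Φ Δ S := by
  obtain ⟨f, hf⟩ := exists_isCoord hind hα
  refine mem_phiRad_of_pos hbase hf.nonneg (hf.apply_sdiff hαS)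
    (hinv _ (simpleReflection_mem_weylSubgroup hα) γ hγ.1.1) ?_
  have hα0 : α ≠ 0 := by rintro rfl; simp at hγα
  have hk : 2 * ⟪α, γ⟫ / ‖α‖ ^ 2 < 0 :=
    div_neg_of_neg_of_pos (by rw [real_inner_comm]; linarith) (by positivity)
  rw [f.apply_simpleReflection, hf α hα, if_pos rfl, mul_one]
  linarith [hγ.1.2.nonneg hf.nonneg]

lemma inner_sum_phiRad_pos (h0 : (0 : E) ∉ Φ) (hΔΦ : ↑Δ ⊆ Φ)
    (hind : LinearIndependent ℝ (fun a : Δ => (a : E)))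
    (hbase : ∀ γ ∈ Φ, IsNNComb Δ γ ∨ IsNNComb Δ (-γ))
    (hinv : ∀ w ∈ weylSubgroup Δ, ∀ γ ∈ Φ, w γ ∈ Φ) {T : Finset E} (hT : ↑T = phiRad Φ Δ S)
    {α : E} (hα : α ∈ Δ) (hαS : α ∈ S) : 0 < ⟪∑ γ ∈ T, γ, α⟫ := by
  have hmem : ∀ γ, γ ∈ T ↔ γ ∈ phiRad Φ Δ S := fun γ => by rw [← hT, Finset.mem_coe]
  have hαrad := mem_phiRad_of_mem hΔΦ hind hα hαS
  refine inner_sum_pos_of_simpleReflection ((hmem α).mpr hαrad)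
    (fun h => neg_notMem_posRoots h0 hind hαrad.1 ((hmem _).mp h).1) fun γ hγ hsγ => ?_
  by_contra! hγα
  exact hsγ ((hmem _).mpr
    (simpleReflection_mem_phiRad_of_inner_neg hind hbase hinv hα hαS ((hmem γ).mp hγ) hγα))

lemma weylSubgroup_sdiff_le_stabilizer (hind : LinearIndependent ℝ (fun a : Δ => (a : E)))
    (hbase : ∀ γ ∈ Φ, IsNNComb Δ γ ∨ IsNNComb Δ (-γ))
    (hinv : ∀ w ∈ weylSubgroup Δ, ∀ γ ∈ Φ, w γ ∈ Φ) :
    weylSubgroup (Δ \ S) ≤ MulAction.stabilizer (E ≃ₗ[ℝ] E) (phiRad Φ Δ S) := by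
  refine (Subgroup.closure_le _).mpr ?_
  rintro _ ⟨α, hα, rfl⟩
  have hsub : (fun x => simpleReflection α x) '' phiRad Φ Δ S ⊆ phiRad Φ Δ S := by
    rintro _ ⟨γ, hγ, rfl⟩
    exact simpleReflection_mem_phiRad hind hbase hinv hα hγ
  exact hsub.antisymm fun γ hγ =>
    ⟨simpleReflection α γ, hsub ⟨γ, hγ, rfl⟩, simpleReflection_involutive α γ⟩

end Roots

section Words

variable {Φ : Set E} {Δ : Finset E}

lemma exists_wordProd_mul_simpleReflection_eq (h0 : (0 : E) ∉ Φ) (hΔΦ : ↑Δ ⊆ Φ)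
    (hind : LinearIndependent ℝ (fun a : Δ => (a : E)))
    (hbase : ∀ γ ∈ Φ, IsNNComb Δ γ ∨ IsNNComb Δ (-γ))
    (hinv : ∀ w ∈ weylSubgroup Δ, ∀ γ ∈ Φ, w γ ∈ Φ) {β : E} (hβ : β ∈ Δ) :
    ∀ {l : List E}, (∀ a ∈ l, a ∈ Δ) → wordProd l β ∉ posRoots Φ Δ →
      ∃ l' : List E, (∀ a ∈ l', a ∈ Δ) ∧ l'.length + 1 = l.length ∧
        wordProd l * simpleReflection β = wordProd l'
  | [], _, hneg => absurd ⟨hΔΦ hβ, isNNComb_self hβ⟩ hneg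
  | α :: l, hl, hneg => by
    have hα : α ∈ Δ := hl α List.mem_cons_self
    have hlΔ : ∀ a ∈ l, a ∈ Δ := fun a ha => hl a (List.mem_cons_of_mem α ha)
    by_cases hpos : wordProd l β ∈ posRoots Φ Δ
    · -- `s_α` sends the positive root `wordProd l β` to a negative one, so it is a multiple of `α`
      obtain ⟨c, hc⟩ : IsNNComb {α} (wordProd l β) := by
        by_contra h
        exact hneg (simpleReflection_mem_posRoots hind hbase hinv hα hpos h)
      rw [Finset.sum_singleton] at hc
      have hc0 : (c α : ℝ) ≠ 0 := fun h => h0 (by rw [hc, h, zero_smul] at hpos; exact hpos.1)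
      have hconj : wordProd l * simpleReflection β * (wordProd l)⁻¹ = simpleReflection α := by
        rw [mul_simpleReflection_mul_inv (inner_wordProd l), hc, simpleReflection_smul α hc0]
      refine ⟨l, hlΔ, rfl, ?_⟩
      rw [wordProd_cons, ← hconj]
      simp [mul_assoc, simpleReflection_mul_self]
    · obtain ⟨l', hl', hlen, heq⟩ :=
        exists_wordProd_mul_simpleReflection_eq h0 hΔΦ hind hbase hinv hβ hlΔ hpos
      refine ⟨α :: l', ?_, by simp [hlen], by rw [wordProd_cons, wordProd_cons, mul_assoc, heq]⟩
      exact fun a ha => (List.mem_cons.mp ha).elim (· ▸ hα) (hl' a)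

lemma wordProd_mem_weylSubgroup_filter_of_apply_eq_self (h0 : (0 : E) ∉ Φ) (hΔΦ : ↑Δ ⊆ Φ)
    (hind : LinearIndependent ℝ (fun a : Δ => (a : E)))
    (hbase : ∀ γ ∈ Φ, IsNNComb Δ γ ∨ IsNNComb Δ (-γ))
    (hinv : ∀ w ∈ weylSubgroup Δ, ∀ γ ∈ Φ, w γ ∈ Φ) {x : E} (hx : ∀ a ∈ Δ, 0 ≤ ⟪x, a⟫)
    {l : List E} (hl : ∀ a ∈ l, a ∈ Δ) (hlx : wordProd l x = x) :
    wordProd l ∈ weylSubgroup {a ∈ Δ | ⟪x, a⟫ = 0} := by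
  induction hn : l.length using Nat.strong_induction_on generalizing l with
  | _ n ih =>
    rcases l.eq_nil_or_concat' with rfl | ⟨L, β, rfl⟩
    · exact one_mem _
    have hβ : β ∈ Δ := hl β (by simp)
    have hL : ∀ a ∈ L, a ∈ Δ := fun a ha => hl a (by simp [ha])
    have hLn : L.length < n := by simp [← hn]
    by_cases hpos : wordProd L β ∈ posRoots Φ Δ
    · have hxβ : ⟪x, β⟫ = 0 := by
        have hw : ⟪x, β⟫ = -⟪x, wordProd L β⟫ := by
          rw [← inner_wordProd (L ++ [β]), hlx, wordProd_append, wordProd_singleton,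
            LinearEquiv.mul_apply, simpleReflection_apply_self, map_neg, inner_neg_right]
        have : 0 ≤ ⟪x, wordProd L β⟫ := hpos.2.nonneg (f := innerₗ E x) hx
        linarith [hx β hβ]
      have hLx : wordProd L x = x := by
        rwa [wordProd_append, wordProd_singleton, LinearEquiv.mul_apply,
          simpleReflection_apply_eq_self_iff.mpr (by rwa [real_inner_comm])] at hlx
      rw [wordProd_append, wordProd_singleton]
      exact mul_mem (ih _ hLn hL hLx rfl)
        (simpleReflection_mem_weylSubgroup (Finset.mem_filter.mpr ⟨hβ, hxβ⟩))
    · obtain ⟨L', hL', hlen, heq⟩ :=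
        exists_wordProd_mul_simpleReflection_eq h0 hΔΦ hind hbase hinv hβ hL hpos
      rw [wordProd_append, wordProd_singleton, heq] at hlx ⊢
      exact ih _ (by omega) hL' hlx rfl

theorem mem_weylSubgroup_filter_of_apply_eq_self (h0 : (0 : E) ∉ Φ) (hΔΦ : ↑Δ ⊆ Φ)
    (hind : LinearIndependent ℝ (fun a : Δ => (a : E)))
    (hbase : ∀ γ ∈ Φ, IsNNComb Δ γ ∨ IsNNComb Δ (-γ))
    (hinv : ∀ w ∈ weylSubgroup Δ, ∀ γ ∈ Φ, w γ ∈ Φ) {x : E} (hx : ∀ a ∈ Δ, 0 ≤ ⟪x, a⟫)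
    {w : E ≃ₗ[ℝ] E} (hw : w ∈ weylSubgroup Δ) (hwx : w x = x) :
    w ∈ weylSubgroup {a ∈ Δ | ⟪x, a⟫ = 0} := by
  obtain ⟨l, hl, rfl⟩ := exists_wordProd_eq_of_mem_weylSubgroup hw
  exact wordProd_mem_weylSubgroup_filter_of_apply_eq_self h0 hΔΦ hind hbase hinv hx hl hwx

end Words

theorem stabilizer_phiRad_eq_parabolic_general
    (Φ : Set V) (Δ : Finset V)
    (hfin : Φ.Finite) (h0 : (0 : V) ∉ Φ) (hΔΦ : ↑Δ ⊆ Φ)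
    (hind : LinearIndependent ℝ (fun a : Δ => (a : V)))
    (hbase : ∀ γ ∈ Φ, IsNNComb Δ γ ∨ IsNNComb Δ (-γ))
    (hinv : ∀ w ∈ weylSubgroup Δ, ∀ γ ∈ Φ, w γ ∈ Φ)
    (S : Finset V) :
    ∀ w ∈ weylSubgroup Δ,
      ((fun x => w x) '' phiRad Φ Δ S = phiRad Φ Δ S ↔ w ∈ weylSubgroup (Δ \ S)) := by
  obtain ⟨T, hT⟩ := (hfin.subset fun γ (hγ : γ ∈ phiRad Φ Δ S) => hγ.1.1).exists_finset_coe
  have hstab := weylSubgroup_sdiff_le_stabilizer (S := S) hind hbase hinv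
  have hpos : ∀ α ∈ Δ, α ∈ S → 0 < ⟪∑ γ ∈ T, γ, α⟫ :=
    fun α hα hαS => inner_sum_phiRad_pos h0 hΔΦ hind hbase hinv hT hα hαS
  have horth : ∀ α ∈ Δ \ S, ⟪∑ γ ∈ T, γ, α⟫ = 0 := fun α hα => by
    rw [real_inner_comm, ← simpleReflection_apply_eq_self_iff]
    exact apply_sum_eq_of_image_eq (hT ▸ hstab (simpleReflection_mem_weylSubgroup hα))
  have hdom : ∀ α ∈ Δ, 0 ≤ ⟪∑ γ ∈ T, γ, α⟫ := fun α hα => by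
    by_cases hαS : α ∈ S
    · exact (hpos α hα hαS).le
    · exact (horth α (Finset.mem_sdiff.mpr ⟨hα, hαS⟩)).ge
  refine fun w hw => ⟨fun hwS => ?_, fun hwS => hstab hwS⟩
  refine weylSubgroup_mono (fun α hα => ?_)
    (mem_weylSubgroup_filter_of_apply_eq_self h0 hΔΦ hind hbase hinv hdom hw
      (apply_sum_eq_of_image_eq (hT ▸ hwS)))
  obtain ⟨hαΔ, hαx⟩ := Finset.mem_filter.mp hα
  exact Finset.mem_sdiff.mpr ⟨hαΔ, fun hαS => (hpos α hαΔ hαS).ne' hαx⟩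

/-- The stabilizer of `Φ^rad(S)` in the Weyl group `W` is the standard parabolic
subgroup `W_{Δ \ S}`. -/
theorem stabilizer_phiRad_eq_parabolic
    (Φ : Set V) (Δ : Finset V)
    (hfin : Φ.Finite) (h0 : (0 : V) ∉ Φ) (hΔΦ : ↑Δ ⊆ Φ)
    (hind : LinearIndependent ℝ (fun a : Δ => (a : V)))
    (hbase : ∀ γ ∈ Φ, IsNNComb Δ γ ∨ IsNNComb Δ (-γ))
    (hinv : ∀ w ∈ weylSubgroup Δ, ∀ γ ∈ Φ, w γ ∈ Φ)
    (S : Finset V) (hS : S ⊆ Δ) :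
    ∀ w ∈ weylSubgroup Δ,
      ((fun x => w x) '' phiRad Φ Δ S = phiRad Φ Δ S ↔ w ∈ weylSubgroup (Δ \ S)) :=
  stabilizer_phiRad_eq_parabolic_general Φ Δ hfin h0 hΔΦ hind hbase hinv S
end

section
/- Let g and h be restricted Lie algebras over a field k of characteristic p > 0, and let E ⊆ g ⊕ h be an elementary subalgebra of maximal dimension. If E₁ ⊆ g and E₂ ⊆ h are the images of E under the two projections, then E = E₁ ⊕ E₂. -/
set_option autoImplicit false

open Module

/-- A restricted Lie algebra over `k` in characteristic `p`: a Lie algebra equipped with a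
`p`-operation `x ↦ x^[p]`. -/
class RestrictedLieAlgebra (p : ℕ) (k : Type*) (L : Type*)
    [CommRing k] [LieRing L] [LieAlgebra k L] : Type _ where
  /-- The `p`-operation. -/
  pmap : L → L
  pmap_zero : pmap 0 = 0
  pmap_smul : ∀ (a : k) (x : L), pmap (a • x) = a ^ p • pmap x
  lie_pmap : ∀ x y : L, ⁅pmap x, y⁆ = ((LieAlgebra.ad k L x) ^ p) y

variable (p : ℕ) (k : Type*) {L M : Type*}

section

variable [CommRing k] [LieRing L] [LieAlgebra k L] [RestrictedLieAlgebra p k L]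

/-- An elementary subalgebra: a Lie subalgebra that is abelian and on which the
`p`-operation vanishes identically. -/
def LieSubalgebra.IsElementary (E : LieSubalgebra k L) : Prop :=
  (∀ x ∈ E, ∀ y ∈ E, ⁅x, y⁆ = (0 : L)) ∧
    ∀ x ∈ E, RestrictedLieAlgebra.pmap p k x = (0 : L)

end

section Prod

variable [CommRing k] [LieRing L] [LieAlgebra k L] [LieRing M] [LieAlgebra k M]

instance : LieRing (L × M) :=
  { (inferInstance : AddCommGroup (L × M)) with
    bracket := fun x y => (⁅x.1, y.1⁆, ⁅x.2, y.2⁆)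
    add_lie := fun x y z => Prod.ext (add_lie x.1 y.1 z.1) (add_lie x.2 y.2 z.2)
    lie_add := fun x y z => Prod.ext (lie_add x.1 y.1 z.1) (lie_add x.2 y.2 z.2)
    lie_self := fun x => Prod.ext (lie_self x.1) (lie_self x.2)
    leibniz_lie := fun x y z =>
      Prod.ext (leibniz_lie x.1 y.1 z.1) (leibniz_lie x.2 y.2 z.2) }

instance : LieAlgebra k (L × M) :=
  { (inferInstance : Module k (L × M)) with
    lie_smul := fun t x y => Prod.ext (lie_smul t x.1 y.1) (lie_smul t x.2 y.2) }

instance [RestrictedLieAlgebra p k L] [RestrictedLieAlgebra p k M] :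
    RestrictedLieAlgebra p k (L × M) where
  pmap x := (RestrictedLieAlgebra.pmap p k x.1, RestrictedLieAlgebra.pmap p k x.2)
  pmap_zero := by simp [RestrictedLieAlgebra.pmap_zero]
  pmap_smul a x := by
    ext <;> simp [RestrictedLieAlgebra.pmap_smul]
  lie_pmap x y := by
    have key : ∀ (n : ℕ) (z : L × M),
        ((LieAlgebra.ad k (L × M) x) ^ n) z
          = (((LieAlgebra.ad k L x.1) ^ n) z.1, ((LieAlgebra.ad k M x.2) ^ n) z.2) := by
      intro n
      induction n with
      | zero => intro z; rfl
      | succ n ih =>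
          intro z
          rw [pow_succ, pow_succ, pow_succ]
          simp only [Module.End.mul_apply, LieAlgebra.ad_apply]
          exact ih ⁅x, z⁆
    rw [key p y]
    exact Prod.ext (RestrictedLieAlgebra.lie_pmap x.1 y.1)
      (RestrictedLieAlgebra.lie_pmap x.2 y.2)

/-- The first projection `L × M → L` as a morphism of Lie algebras. -/
def fstLieHom : L × M →ₗ⁅k⁆ L :=
  { LinearMap.fst k L M with map_lie' := rfl }

/-- The second projection `L × M → M` as a morphism of Lie algebras. -/
def sndLieHom : L × M →ₗ⁅k⁆ M :=
  { LinearMap.snd k L M with map_lie' := rfl }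

end Prod

/-! Both projections of an elementary subalgebra `E ⊆ g ⊕ h` are elementary, and since bracket
and `p`-map on `g ⊕ h` act componentwise, so is `E₁ ⊕ E₂ ⊇ E`. Every subspace of an elementary
subalgebra is elementary, so maximality of `E` bounds the dimension of all finite-dimensional
subspaces of `E₁ ⊕ E₂`; hence `E₁ ⊕ E₂` is finite-dimensional (which `finrank`, being `0` on
infinite-dimensional spaces, does not give for free), and `dim (E₁ ⊕ E₂) ≤ dim E` forces equality. -/

theorem Module.finite_of_forall_finrank_submodule_le {K V : Type*} [DivisionRing K]
    [AddCommGroup V] [Module K V] (n : ℕ) (h : ∀ T : Submodule K V, finrank K T ≤ n) :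
    FiniteDimensional K V := by
  by_contra hinf
  have hrank : ((n + 1 : ℕ) : Cardinal) ≤ Module.rank K V :=
    Cardinal.natCast_lt_aleph0.le.trans
      (not_lt.1 fun hlt => hinf (Module.rank_lt_aleph0_iff.1 hlt))
  obtain ⟨s, hcard, hli⟩ := le_rank_iff_exists_linearIndependent_finset.1 hrank
  have hspan := h (Submodule.span K s)
  rw [finrank_span_finset_eq_card hli] at hspan
  omega

def Submodule.toLieSubalgebraOfLieEqZero {R L : Type*} [CommRing R] [LieRing L] [LieAlgebra R L]
    (S : Submodule R L) (h : ∀ x ∈ S, ∀ y ∈ S, ⁅x, y⁆ = 0) : LieSubalgebra R L :=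
  { S with lie_mem' := fun hx hy => (h _ hx _ hy).symm ▸ S.zero_mem }

namespace LieSubalgebra

variable {p k}

theorem IsElementary.mono [CommRing k] [LieRing L] [LieAlgebra k L] [RestrictedLieAlgebra p k L]
    {E E' : LieSubalgebra k L} (hE' : E'.IsElementary p) (hle : E ≤ E') : E.IsElementary p :=
  ⟨fun x hx y hy => hE'.1 x (hle hx) y (hle hy), fun x hx => hE'.2 x (hle hx)⟩

section Field

variable [Field k] [LieRing L] [LieAlgebra k L] [RestrictedLieAlgebra p k L]
  {E E' : LieSubalgebra k L}

theorem IsElementary.finiteDimensional_of_forall_finrank_le (hE : E.IsElementary p) (n : ℕ)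
    (hbound : ∀ E'' : LieSubalgebra k L, E''.IsElementary p → finrank k E'' ≤ n) :
    FiniteDimensional k E := by
  refine Module.finite_of_forall_finrank_submodule_le n fun T => ?_
  set S := T.map E.toSubmodule.subtype
  have hSE : S ≤ E.toSubmodule := Submodule.map_subtype_le _ _
  have hS : ∀ x ∈ S, ∀ y ∈ S, ⁅x, y⁆ = 0 := fun x hx y hy => hE.1 x (hSE hx) y (hSE hy)
  calc finrank k T = finrank k S := (Submodule.finrank_map_subtype_eq _ T).symm
    _ ≤ n := hbound (S.toLieSubalgebraOfLieEqZero hS) (hE.mono hSE)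

theorem IsElementary.eq_of_le (hE' : E'.IsElementary p) (hle : E ≤ E')
    (hmax : ∀ E'' : LieSubalgebra k L, E''.IsElementary p → finrank k E'' ≤ finrank k E) :
    E = E' := by
  have := hE'.finiteDimensional_of_forall_finrank_le _ hmax
  exact toSubmodule_injective (Submodule.eq_of_le_of_finrank_le hle (hmax E' hE'))

end Field

section Prod

variable [CommRing k] [LieRing L] [LieAlgebra k L] [LieRing M] [LieAlgebra k M]

def prod (E₁ : LieSubalgebra k L) (E₂ : LieSubalgebra k M) : LieSubalgebra k (L × M) :=
  { E₁.toSubmodule.prod E₂.toSubmodule with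
    lie_mem' := fun hx hy => ⟨E₁.lie_mem hx.1 hy.1, E₂.lie_mem hx.2 hy.2⟩ }

theorem coe_prod (E₁ : LieSubalgebra k L) (E₂ : LieSubalgebra k M) :
    (E₁.prod E₂ : Set (L × M)) = (E₁ : Set L) ×ˢ (E₂ : Set M) :=
  rfl

theorem le_prod_map_fst_map_snd (E : LieSubalgebra k (L × M)) :
    E ≤ (E.map (fstLieHom k)).prod (E.map (sndLieHom k)) :=
  fun x hx => ⟨⟨x, hx, rfl⟩, ⟨x, hx, rfl⟩⟩

variable [RestrictedLieAlgebra p k L] [RestrictedLieAlgebra p k M]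

theorem IsElementary.prod {E₁ : LieSubalgebra k L} {E₂ : LieSubalgebra k M}
    (h₁ : E₁.IsElementary p) (h₂ : E₂.IsElementary p) : (E₁.prod E₂).IsElementary p :=
  ⟨fun _ hx _ hy => Prod.ext (h₁.1 _ hx.1 _ hy.1) (h₂.1 _ hx.2 _ hy.2),
    fun _ hx => Prod.ext (h₁.2 _ hx.1) (h₂.2 _ hx.2)⟩

theorem IsElementary.map_fst {E : LieSubalgebra k (L × M)} (hE : E.IsElementary p) :
    (E.map (fstLieHom k)).IsElementary p := by
  constructor
  · rintro _ ⟨x, hx, rfl⟩ _ ⟨y, hy, rfl⟩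
    exact congrArg Prod.fst (hE.1 x hx y hy)
  · rintro _ ⟨x, hx, rfl⟩
    exact congrArg Prod.fst (hE.2 x hx)

theorem IsElementary.map_snd {E : LieSubalgebra k (L × M)} (hE : E.IsElementary p) :
    (E.map (sndLieHom k)).IsElementary p := by
  constructor
  · rintro _ ⟨x, hx, rfl⟩ _ ⟨y, hy, rfl⟩
    exact congrArg Prod.snd (hE.1 x hx y hy)
  · rintro _ ⟨x, hx, rfl⟩
    exact congrArg Prod.snd (hE.2 x hx)

end Prod

end LieSubalgebra

theorem elementary_max_eq_prod_of_images_general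
    {p : ℕ} {k L M : Type*} [Field k]
    [LieRing L] [LieAlgebra k L] [LieRing M] [LieAlgebra k M]
    [RestrictedLieAlgebra p k L] [RestrictedLieAlgebra p k M]
    (E : LieSubalgebra k (L × M))
    (hE : E.IsElementary p)
    (hmax : ∀ E' : LieSubalgebra k (L × M), E'.IsElementary p →
      Module.finrank k E' ≤ Module.finrank k E) :
    (E : Set (L × M)) =
      (↑(E.map (fstLieHom k)) : Set L) ×ˢ (↑(E.map (sndLieHom k)) : Set M) := by
  have hprod := hE.map_fst.prod hE.map_snd
  rw [← LieSubalgebra.coe_prod, ← hprod.eq_of_le (LieSubalgebra.le_prod_map_fst_map_snd E) hmax]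

/-- If `E` is an elementary subalgebra of maximal dimension of `g ⊕ h` and `E₁`, `E₂` are
its images under the two projections, then `E = E₁ ⊕ E₂`. -/
theorem elementary_max_eq_prod_of_images
    {p : ℕ} (hp : 0 < p) {k L M : Type*} [Field k] [CharP k p]
    [LieRing L] [LieAlgebra k L] [LieRing M] [LieAlgebra k M]
    [RestrictedLieAlgebra p k L] [RestrictedLieAlgebra p k M]
    (E : LieSubalgebra k (L × M))
    (hE : E.IsElementary p)
    (hmax : ∀ E' : LieSubalgebra k (L × M), E'.IsElementary p →
      Module.finrank k E' ≤ Module.finrank k E) :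
    (E : Set (L × M)) =
      (↑(E.map (fstLieHom k)) : Set L) ×ˢ (↑(E.map (sndLieHom k)) : Set M) :=
  elementary_max_eq_prod_of_images_general E hE hmax
end

section
/- In the root system of type A_{2n+1} (with n ≥ 0) with the standard base α_1, …, α_{2n+1}, the set Φ^rad(n+1) of positive roots whose coefficient on α_{n+1} is nonzero is, up to equality, the unique maximal-cardinality set of pairwise commuting positive roots, and it has (n+1)² elements. -/
/-!
A positive root `ε_i − ε_j` is a pair `i < j`, and a commuting set never contains a chain
`(i, j), (j, l)`, because `(ε_i − ε_j) + (ε_j − ε_l) = ε_i − ε_l` is a root. Hence the sets `F` of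
first and `S` of second indices are disjoint, the set lies in `F × S`, and
`|F| + |S| ≤ 2n + 2` bounds its size by `(n + 1)²` (AM–GM). At equality it is all of `F × S`,
so every index of `F` lies below every index of `S` and `|F| = |S| = n + 1`: `F` and `S` are the
lower and upper halves of the indices, which is exactly `Φ^rad(n+1)`.
-/

set_option autoImplicit false

namespace TypeAOdd

variable (n : ℕ)

/-- The standard basis vector `ε i` of `ℝ^{2n+2}` (with integer coordinates). -/
def eps (i : Fin (2 * n + 2)) : Fin (2 * n + 2) → ℤ := Pi.single i 1

/-- The root system of type `A_{2n+1}`: the vectors `ε_i − ε_j` for `i ≠ j`. -/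
def Phi : Set (Fin (2 * n + 2) → ℤ) :=
  {x | ∃ i j : Fin (2 * n + 2), i ≠ j ∧ x = eps n i - eps n j}

/-- The positive roots `ε_i − ε_j` with `i < j`. -/
def PhiPos : Set (Fin (2 * n + 2) → ℤ) :=
  {x | ∃ i j : Fin (2 * n + 2), i < j ∧ x = eps n i - eps n j}

/-- `Φ^rad(n+1)` (Bourbaki numbering): the positive roots whose coefficient on the middle
simple root `α_{n+1} = ε_{n+1} − ε_{n+2}` is nonzero, i.e. the `ε_i − ε_j` with
`i ≤ n+1 ≤ n+1 < j` (here indexed from `0`, so `i.val ≤ n < j.val`). -/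
def PhiRadMid : Set (Fin (2 * n + 2) → ℤ) :=
  {x | ∃ i j : Fin (2 * n + 2), i.val ≤ n ∧ n < j.val ∧ x = eps n i - eps n j}

end TypeAOdd

open Finset

section ComposablePairs

variable {α : Type*} [DecidableEq α] {P : Finset (α × α)}

theorem Finset.disjoint_image_fst_image_snd (hP : ∀ p ∈ P, ∀ q ∈ P, p.2 ≠ q.1) :
    Disjoint (P.image Prod.fst) (P.image Prod.snd) := by
  simp only [disjoint_left, mem_image]
  rintro _ ⟨q, hq, rfl⟩ ⟨p, hp, hpq⟩
  exact hP p hp q hq hpq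

variable [Fintype α]

theorem Finset.card_image_fst_add_card_image_snd_le (hP : ∀ p ∈ P, ∀ q ∈ P, p.2 ≠ q.1) :
    #(P.image Prod.fst) + #(P.image Prod.snd) ≤ Fintype.card α := by
  rw [← card_union_of_disjoint (disjoint_image_fst_image_snd hP)]
  exact card_le_univ _

theorem Finset.four_mul_card_le_sq_of_forall_snd_ne_fst (hP : ∀ p ∈ P, ∀ q ∈ P, p.2 ≠ q.1) :
    4 * #P ≤ Fintype.card α ^ 2 := by
  have hsum := card_image_fst_add_card_image_snd_le hP
  calc 4 * #P ≤ 4 * (#(P.image Prod.fst) * #(P.image Prod.snd)) := by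
        rw [← card_product]; gcongr; exact subset_product
    _ ≤ (#(P.image Prod.fst) + #(P.image Prod.snd)) ^ 2 := by
        rw [← mul_assoc]; exact four_mul_le_sq_add _ _
    _ ≤ Fintype.card α ^ 2 := by gcongr

theorem Finset.eq_product_of_four_mul_card_eq_sq (hP : ∀ p ∈ P, ∀ q ∈ P, p.2 ≠ q.1)
    (hcard : 4 * #P = Fintype.card α ^ 2) :
    P = P.image Prod.fst ×ˢ P.image Prod.snd ∧
      #(P.image Prod.fst) = #(P.image Prod.snd) ∧
      #(P.image Prod.fst) + #(P.image Prod.snd) = Fintype.card α := by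
  have hsum := card_image_fst_add_card_image_snd_le hP
  set a := #(P.image Prod.fst)
  set b := #(P.image Prod.snd)
  have hprod : #P ≤ a * b := by rw [← card_product]; exact card_le_card subset_product
  have hamgm : 4 * a * b ≤ (a + b) ^ 2 := four_mul_le_sq_add _ _
  have hsq : (a + b) ^ 2 ≤ Fintype.card α ^ 2 := by gcongr
  refine ⟨eq_of_subset_of_card_le subset_product ?_, ?_, ?_⟩
  · rw [card_product]; nlinarith
  · nlinarith
  · nlinarith

end ComposablePairs

theorem Fin.card_filter_le_val (m k : ℕ) : #{j : Fin m | k ≤ (j : ℕ)} = m - k := by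
  have hsplit := card_filter_add_card_filter_not (s := (univ : Finset (Fin m)))
    fun i : Fin m => (i : ℕ) < k
  simp only [not_lt, card_univ, Fintype.card_fin, Fin.card_filter_val_lt] at hsplit
  omega

theorem Fin.eq_filter_val_lt_of_forall_lt {m : ℕ} {F S : Finset (Fin m)}
    (hlt : ∀ f ∈ F, ∀ s ∈ S, f < s) (hcard : #F + #S = m) :
    F = ({i | (i : ℕ) < #F} : Finset (Fin m)) ∧ S = ({j | #F ≤ (j : ℕ)} : Finset (Fin m)) := by
  have hF : F ⊆ ({i | (i : ℕ) < #F} : Finset (Fin m)) := fun f hf => by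
    have := card_le_card (t := Ioi f) fun s hs => mem_Ioi.2 (hlt f hf s hs)
    rw [Fin.card_Ioi] at this
    simp only [mem_filter, mem_univ, true_and]
    omega
  have hS : S ⊆ ({j | #F ≤ (j : ℕ)} : Finset (Fin m)) := fun s hs => by
    have := card_le_card (t := Iio s) fun f hf => mem_Iio.2 (hlt f hf s hs)
    rw [Fin.card_Iio] at this
    simpa using this
  refine ⟨eq_of_subset_of_card_le hF ?_, eq_of_subset_of_card_le hS ?_⟩
  · rw [Fin.card_filter_val_lt]
    exact min_le_right _ _
  · rw [Fin.card_filter_le_val]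
    omega

namespace TypeAOdd

section

variable {n : ℕ}

def root (p : Fin (2 * n + 2) × Fin (2 * n + 2)) : Fin (2 * n + 2) → ℤ :=
  eps n p.1 - eps n p.2

lemma root_apply (p : Fin (2 * n + 2) × Fin (2 * n + 2)) (k : Fin (2 * n + 2)) :
    root p k = (if k = p.1 then 1 else 0) - (if k = p.2 then 1 else 0) := by
  simp [root, eps, Pi.single_apply]

lemma root_injOn : Set.InjOn (root (n := n)) {p | p.1 ≠ p.2} := by
  rintro ⟨i, j⟩ (hij : i ≠ j) ⟨k, l⟩ (hkl : k ≠ l) h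
  have hi := congrFun h i
  have hj := congrFun h j
  simp only [root_apply, if_pos, if_neg hij, if_neg hij.symm] at hi hj
  refine Prod.ext ?_ ?_
  · by_contra hik
    rw [if_neg hik] at hi
    split_ifs at hi <;> omega
  · by_contra hjl
    rw [if_neg hjl] at hj
    split_ifs at hj <;> omega

lemma apply_le_one_of_mem_phi {x : Fin (2 * n + 2) → ℤ} (hx : x ∈ Phi n) (k : Fin (2 * n + 2)) :
    x k ≤ 1 := by
  obtain ⟨i, j, -, rfl⟩ := hx
  change root (i, j) k ≤ 1
  rw [root_apply]
  split_ifs <;> omega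

lemma eq_of_apply_eq_one_of_mem_phi {x : Fin (2 * n + 2) → ℤ} (hx : x ∈ Phi n)
    {a b : Fin (2 * n + 2)} (ha : x a = 1) (hb : x b = 1) : a = b := by
  obtain ⟨i, j, -, rfl⟩ := hx
  change root (i, j) a = 1 at ha
  change root (i, j) b = 1 at hb
  rw [root_apply] at ha hb
  split_ifs at ha hb <;> simp_all

lemma root_add_root_mem_phi {i j l : Fin (2 * n + 2)} (hil : i ≠ l) :
    root (i, j) + root (j, l) ∈ Phi n :=
  ⟨i, l, hil, by simp only [root]; abel⟩

/-- The sum has a coordinate `2` (if `i = k`) or two coordinates `1`; a root has neither. -/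
lemma root_add_root_notMem_phi {i j k l : Fin (2 * n + 2)} (hij : i ≠ j) (hkl : k ≠ l)
    (hjk : j ≠ k) (hli : l ≠ i) : root (i, j) + root (k, l) ∉ Phi n := by
  intro hx
  by_cases hik : i = k
  · subst hik
    have hxi := apply_le_one_of_mem_phi hx i
    simp [root_apply, hij, hli.symm] at hxi
  · refine hik (eq_of_apply_eq_one_of_mem_phi hx (a := i) (b := k) ?_ ?_) <;>
      simp [root_apply, hij, hli.symm, hjk.symm, hkl, hik, Ne.symm hik]

open Classical in
noncomputable def pairs (R : Set (Fin (2 * n + 2) → ℤ)) :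
    Finset (Fin (2 * n + 2) × Fin (2 * n + 2)) :=
  {p | p.1 < p.2 ∧ root p ∈ R}

variable {R : Set (Fin (2 * n + 2) → ℤ)}

lemma mem_pairs {p : Fin (2 * n + 2) × Fin (2 * n + 2)} :
    p ∈ pairs R ↔ p.1 < p.2 ∧ root p ∈ R := by
  simp [pairs]

lemma coe_image_root_pairs (hR : R ⊆ PhiPos n) : ((pairs R).image root : Set _) = R := by
  ext x
  simp only [coe_image, Set.mem_image, mem_coe, mem_pairs]
  constructor
  · rintro ⟨p, ⟨-, hp⟩, rfl⟩
    exact hp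
  · intro hx
    obtain ⟨i, j, hij, rfl⟩ := hR hx
    exact ⟨(i, j), ⟨hij, hx⟩, rfl⟩

lemma ncard_eq_card_pairs (hR : R ⊆ PhiPos n) : R.ncard = #(pairs R) := by
  have := congrArg Set.ncard (coe_image_root_pairs hR)
  rwa [Set.ncard_coe_finset, card_image_of_injOn
    (root_injOn.mono fun p hp => (mem_pairs.1 hp).1.ne), eq_comm] at this

lemma snd_ne_fst_of_mem_pairs (hcomm : R.Pairwise fun a b => a + b ∉ Phi n) :
    ∀ p ∈ pairs R, ∀ q ∈ pairs R, p.2 ≠ q.1 := by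
  rintro ⟨i, j⟩ hp ⟨_, l⟩ hq rfl
  rw [mem_pairs] at hp hq
  have hne : root (i, j) ≠ root (j, l) := fun h =>
    hp.1.ne (Prod.ext_iff.1 (root_injOn hp.1.ne hq.1.ne h)).1
  exact hcomm hp.2 hq.2 hne (root_add_root_mem_phi (hp.1.trans hq.1).ne)

lemma phiRadMid_eq_image_root :
    PhiRadMid n = ((({i | (i : ℕ) < n + 1} : Finset (Fin (2 * n + 2))) ×ˢ
      ({j | n + 1 ≤ (j : ℕ)} : Finset (Fin (2 * n + 2)))).image root : Set _) := by
  ext x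
  simp only [PhiRadMid, coe_image, coe_product, coe_filter, Set.mem_image, Set.mem_prod,
    mem_univ, true_and, Prod.exists]
  constructor
  · rintro ⟨i, j, hi, hj, rfl⟩
    exact ⟨i, j, ⟨Nat.lt_succ_of_le hi, hj⟩, rfl⟩
  · rintro ⟨i, j, ⟨hi, hj⟩, rfl⟩
    exact ⟨i, j, Nat.le_of_lt_succ hi, hj, rfl⟩

lemma phiRadMid_subset_phiPos : PhiRadMid n ⊆ PhiPos n := by
  rintro _ ⟨i, j, hi, hj, rfl⟩
  exact ⟨i, j, Fin.lt_def.2 (by omega), rfl⟩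

lemma pairwise_phiRadMid : (PhiRadMid n).Pairwise fun a b => a + b ∉ Phi n := by
  rintro _ ⟨i, j, hi, hj, rfl⟩ _ ⟨k, l, hk, hl, rfl⟩ -
  exact root_add_root_notMem_phi (i := i) (j := j) (k := k) (l := l)
    (Fin.ne_of_val_ne (by omega)) (Fin.ne_of_val_ne (by omega))
    (Fin.ne_of_val_ne (by omega)) (Fin.ne_of_val_ne (by omega))

lemma ncard_phiRadMid : (PhiRadMid n).ncard = (n + 1) ^ 2 := by
  rw [phiRadMid_eq_image_root, Set.ncard_coe_finset, card_image_of_injOn, card_product,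
    Fin.card_filter_val_lt, Fin.card_filter_le_val, min_eq_right (by omega),
    show 2 * n + 2 - (n + 1) = n + 1 by omega, sq]
  refine root_injOn.mono fun p hp => Fin.ne_of_val_ne ?_
  simp only [coe_product, coe_filter, Set.mem_prod, Set.mem_ofPred_eq, mem_univ, true_and] at hp
  omega

lemma ncard_le_sq_of_pairwise (hR : R ⊆ PhiPos n)
    (hcomm : R.Pairwise fun a b => a + b ∉ Phi n) : R.ncard ≤ (n + 1) ^ 2 := by
  have := four_mul_card_le_sq_of_forall_snd_ne_fst (snd_ne_fst_of_mem_pairs hcomm)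
  rw [Fintype.card_fin, ← ncard_eq_card_pairs hR] at this
  nlinarith

lemma eq_phiRadMid_of_ncard_eq (hR : R ⊆ PhiPos n)
    (hcomm : R.Pairwise fun a b => a + b ∉ Phi n) (hcard : R.ncard = (n + 1) ^ 2) :
    R = PhiRadMid n := by
  obtain ⟨hprod, hFS, hsum⟩ := eq_product_of_four_mul_card_eq_sq
    (snd_ne_fst_of_mem_pairs hcomm)
    (by rw [Fintype.card_fin, ← ncard_eq_card_pairs hR, hcard]; ring)
  rw [Fintype.card_fin] at hsum
  have hlt : ∀ f ∈ (pairs R).image Prod.fst, ∀ s ∈ (pairs R).image Prod.snd, f < s :=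
    fun f hf s hs => (mem_pairs.1 (show (f, s) ∈ pairs R by
      rw [hprod]; exact mem_product.2 ⟨hf, hs⟩)).1
  obtain ⟨hF, hS⟩ := Fin.eq_filter_val_lt_of_forall_lt hlt hsum
  rw [show #((pairs R).image Prod.fst) = n + 1 by omega] at hF hS
  rw [← coe_image_root_pairs hR, phiRadMid_eq_image_root, hprod, hF, hS]

end

variable (n : ℕ)

/-- In type `A_{2n+1}`, the set `Φ^rad(n+1)` is a set of pairwise commuting positive roots
of cardinality `(n+1)²`, every set of pairwise commuting positive roots has at most
`(n+1)²` elements, and `Φ^rad(n+1)` is the unique such set attaining this bound. -/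
theorem phiRadMid_unique_max :
    (PhiRadMid n ⊆ PhiPos n ∧ (PhiRadMid n).Pairwise fun a b => a + b ∉ Phi n) ∧
    (PhiRadMid n).ncard = (n + 1) ^ 2 ∧
    ∀ R ⊆ PhiPos n, (R.Pairwise fun a b => a + b ∉ Phi n) →
      R.ncard ≤ (n + 1) ^ 2 ∧ (R.ncard = (n + 1) ^ 2 → R = PhiRadMid n) :=
  ⟨⟨phiRadMid_subset_phiPos, pairwise_phiRadMid⟩, ncard_phiRadMid,
    fun _ hR hcomm => ⟨ncard_le_sq_of_pairwise hR hcomm, eq_phiRadMid_of_ncard_eq hR hcomm⟩⟩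

end TypeAOdd
end

section
/- In the root system of type A_{2n} (n ≥ 1), the maximal cardinality of a set of pairwise commuting positive roots is n(n+1), and the sets attaining this maximum are exactly Φ^rad(n) and Φ^rad(n+1). -/
set_option autoImplicit false

namespace TypeAEven

variable (n : ℕ)

/-- The standard basis vector `ε i` of `ℝ^{2n+1}` (with integer coordinates). -/
def eps (i : Fin (2 * n + 1)) : Fin (2 * n + 1) → ℤ := Pi.single i 1

/-- The root system of type `A_{2n}`: the vectors `ε_i − ε_j` for `i ≠ j`. -/
def Phi : Set (Fin (2 * n + 1) → ℤ) :=
  {x | ∃ i j : Fin (2 * n + 1), i ≠ j ∧ x = eps n i - eps n j}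

/-- The positive roots `ε_i − ε_j` with `i < j`. -/
def PhiPos : Set (Fin (2 * n + 1) → ℤ) :=
  {x | ∃ i j : Fin (2 * n + 1), i < j ∧ x = eps n i - eps n j}

/-- `Φ^rad(k)` for the simple root `α_k = ε_k − ε_{k+1}` (indexed from `0`, so Bourbaki's
`α_m` corresponds to `k = m - 1`): the positive roots `ε_i − ε_j` with `i ≤ k < j`. -/
def PhiRad (k : ℕ) : Set (Fin (2 * n + 1) → ℤ) :=
  {x | ∃ i j : Fin (2 * n + 1), i.val ≤ k ∧ k < j.val ∧ x = eps n i - eps n j}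

/-!
Write the positive root `ε_i − ε_j` (`i < j`) as the edge `(i, j)`. Two positive roots fail to
commute exactly when they are composable edges, so for a commuting set `R` the set `S` of tails
and the set `T` of heads are disjoint and `R ⊆ S × T`. Hence `|R| ≤ |S| |T| ≤ n (n + 1)`, since
`|S| + |T| ≤ 2n + 1`. Equality forces `R = S × T` with `{|S|, |T|} = {n, n + 1}` and `S ∪ T`
everything; as every tail precedes every head, `S` is an initial segment, and `R` is a `Φ^rad`.
-/

section Arithmetic

variable {a b : ℕ}

lemma mul_le_of_add_le_two_mul_add_one (h : a + b ≤ 2 * n + 1) : a * b ≤ n * (n + 1) := by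
  nlinarith [sq_nonneg ((a : ℤ) - b)]

lemma add_eq_and_eq_or_eq_of_mul_eq (hn : 1 ≤ n) (h : a + b ≤ 2 * n + 1)
    (hab : a * b = n * (n + 1)) : a + b = 2 * n + 1 ∧ (a = n ∨ a = n + 1) := by
  have hna : n ≤ a := by nlinarith
  have han : a ≤ n + 1 := by nlinarith
  have hsum : a + b = 2 * n + 1 := by
    rcases (by omega : a = n ∨ a = n + 1) with rfl | rfl <;> nlinarith
  exact ⟨hsum, by omega⟩

end Arithmetic

section EdgeSets

variable {α : Type*} [DecidableEq α] {P : Finset (α × α)}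

lemma disjoint_image_fst_image_snd (hP : ∀ p ∈ P, ∀ q ∈ P, p.2 ≠ q.1) :
    Disjoint (P.image Prod.fst) (P.image Prod.snd) := by
  simp only [Finset.disjoint_left, Finset.mem_image]
  rintro _ ⟨p, hp, rfl⟩ ⟨q, hq, hqp⟩
  exact hP q hq p hp hqp

lemma card_le_of_snd_ne_fst [Fintype α] (hα : Fintype.card α = 2 * n + 1)
    (hP : ∀ p ∈ P, ∀ q ∈ P, p.2 ≠ q.1) : P.card ≤ n * (n + 1) := by
  have hsum := Finset.card_union_of_disjoint (disjoint_image_fst_image_snd hP)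
  have hle := Finset.card_le_univ (P.image Prod.fst ∪ P.image Prod.snd)
  calc P.card ≤ (P.image Prod.fst ×ˢ P.image Prod.snd).card :=
        Finset.card_le_card Finset.subset_product
    _ = (P.image Prod.fst).card * (P.image Prod.snd).card := Finset.card_product _ _
    _ ≤ n * (n + 1) := mul_le_of_add_le_two_mul_add_one n (by omega)

end EdgeSets

lemma _root_.Fin.mem_iff_val_lt_card_of_lt {m : ℕ} {S : Finset (Fin m)}
    (hS : ∀ x ∈ S, ∀ y ∉ S, x < y) (x : Fin m) : x ∈ S ↔ x.val < S.card := by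
  have hdown : ∀ i j : Fin m, j ≤ i → i ∈ S → j ∈ S := fun i j hji hi =>
    by_contra fun hj => (hS i hi j hj).not_ge hji
  simpa using (Fin.lt_card_filter_univ_iff_apply_of_imp (j := x) (· ∈ S) hdown).symm

def radPairs (k : ℕ) : Finset (Fin (2 * n + 1) × Fin (2 * n + 1)) :=
  Finset.univ.filter fun p => p.1.val ≤ k ∧ k < p.2.val

lemma card_radPairs {k : ℕ} (hk : k < 2 * n + 1) :
    (radPairs n k).card = (k + 1) * (2 * n - k) := by
  have hprod : radPairs n k = Finset.univ.filter (fun x : Fin (2 * n + 1) => x.val < k + 1) ×ˢ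
      Finset.univ.filter (fun x => ¬ x.val < k + 1) := by
    ext p
    simp only [radPairs, Finset.mem_filter, Finset.mem_univ, true_and, Finset.mem_product]
    omega
  rw [hprod, Finset.card_product, Finset.filter_not, Finset.card_univ_sdiff, Fin.card_filter_val_lt,
    Fintype.card_fin]
  congr 1 <;> omega

lemma eq_radPairs_of_card_eq (hn : 1 ≤ n) {P : Finset (Fin (2 * n + 1) × Fin (2 * n + 1))}
    (hlt : ∀ p ∈ P, p.1 < p.2) (hP : ∀ p ∈ P, ∀ q ∈ P, p.2 ≠ q.1)
    (hcard : P.card = n * (n + 1)) : P = radPairs n (n - 1) ∨ P = radPairs n n := by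
  set S := P.image Prod.fst
  set T := P.image Prod.snd
  have hdisj : Disjoint S T := disjoint_image_fst_image_snd hP
  have hST : S.card + T.card ≤ 2 * n + 1 := by
    simpa [Finset.card_union_of_disjoint hdisj] using Finset.card_le_univ (S ∪ T)
  have hle : P.card ≤ S.card * T.card :=
    (Finset.card_le_card Finset.subset_product).trans_eq (Finset.card_product _ _)
  have hmul : S.card * T.card = n * (n + 1) :=
    le_antisymm (mul_le_of_add_le_two_mul_add_one n hST) (hcard ▸ hle)
  obtain ⟨hsum, hScard⟩ := add_eq_and_eq_or_eq_of_mul_eq n hn hST hmul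
  have hPST : P = S ×ˢ T :=
    Finset.eq_of_subset_of_card_le Finset.subset_product (by rw [Finset.card_product]; omega)
  have hT : ∀ x, x ∈ T ↔ x ∉ S := by
    have hunion : S ∪ T = Finset.univ :=
      Finset.eq_univ_of_card _ (by rw [Finset.card_union_of_disjoint hdisj]; simpa)
    intro x
    refine ⟨fun hxT hxS => Finset.disjoint_left.1 hdisj hxS hxT, fun hxS => ?_⟩
    simpa [hxS] using (hunion.symm ▸ Finset.mem_univ x : x ∈ S ∪ T)
  have hSlt : ∀ s ∈ S, ∀ t ∉ S, s < t := fun s hs t ht =>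
    hlt (s, t) (hPST ▸ Finset.mem_product.2 ⟨hs, (hT t).2 ht⟩)
  have hmem : ∀ p, p ∈ P ↔ p.1.val < S.card ∧ S.card ≤ p.2.val := fun p => by
    rw [hPST, Finset.mem_product, hT, Fin.mem_iff_val_lt_card_of_lt hSlt,
      Fin.mem_iff_val_lt_card_of_lt hSlt, not_lt]
  rcases hScard with h | h <;> [left; right] <;> ext p <;>
    simp only [hmem, radPairs, Finset.mem_filter, Finset.mem_univ, true_and] <;> omega

def root (p : Fin (2 * n + 1) × Fin (2 * n + 1)) : Fin (2 * n + 1) → ℤ := eps n p.1 - eps n p.2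

lemma root_apply (p : Fin (2 * n + 1) × Fin (2 * n + 1)) (t : Fin (2 * n + 1)) :
    root n p t = (if t = p.1 then 1 else 0) - (if t = p.2 then 1 else 0) := by
  simp [root, eps, Pi.single_apply]

lemma root_mem_Phi {p : Fin (2 * n + 1) × Fin (2 * n + 1)} (hp : p.1 ≠ p.2) : root n p ∈ Phi n :=
  ⟨p.1, p.2, hp, rfl⟩

lemma root_injOn : Set.InjOn (root n) {p | p.1 ≠ p.2} := by
  rintro ⟨i, j⟩ hij ⟨k, l⟩ hkl h
  have hi := congrFun h i
  have hj := congrFun h j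
  simp only [root_apply] at hi hj
  grind

lemma root_add_root_mem_Phi_iff {p q : Fin (2 * n + 1) × Fin (2 * n + 1)} (hp : p.1 < p.2)
    (hq : q.1 < q.2) : root n p + root n q ∈ Phi n ↔ p.2 = q.1 ∨ q.2 = p.1 := by
  constructor
  · rintro ⟨i, j, hij, hsum⟩
    change root n p + root n q = root n (i, j) at hsum
    have hp1 := congrFun hsum p.1
    have hq1 := congrFun hsum q.1
    simp only [Pi.add_apply, root_apply] at hp1 hq1
    -- Otherwise the sum is positive at both `p.1` and `q.1`, so `p.1 = q.1 = i` and it is `2` there.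
    grind
  · rintro (h | h)
    · convert root_mem_Phi n (p := (p.1, q.2)) (hp.trans (h ▸ hq)).ne using 1
      simp only [root, h]
      abel
    · convert root_mem_Phi n (p := (q.1, p.2)) (hq.trans (h ▸ hp)).ne using 1
      simp only [root, h]
      abel

lemma ncard_image_root {P : Finset (Fin (2 * n + 1) × Fin (2 * n + 1))} (hP : ∀ p ∈ P, p.1 < p.2) :
    (root n '' P).ncard = P.card := by
  rw [((root_injOn n).mono fun p hp => (hP p hp).ne).ncard_image, Set.ncard_coe_finset]

lemma PhiRad_eq_image_root (k : ℕ) : PhiRad n k = root n '' radPairs n k := by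
  ext x
  simp only [PhiRad, radPairs, Finset.coe_filter, Set.mem_image, Finset.mem_univ, true_and,
    Set.mem_ofPred_eq, Prod.exists, root, eq_comm (a := x), and_assoc]

lemma PhiRad_subset_PhiPos (k : ℕ) : PhiRad n k ⊆ PhiPos n := by
  rintro x ⟨i, j, hik, hkj, rfl⟩
  exact ⟨i, j, Fin.lt_def.2 (by omega), rfl⟩

lemma pairwise_PhiRad (k : ℕ) : (PhiRad n k).Pairwise fun a b => a + b ∉ Phi n := by
  rw [PhiRad_eq_image_root]
  rintro _ ⟨p, hp, rfl⟩ _ ⟨q, hq, rfl⟩ -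
  simp only [radPairs, Finset.coe_filter, Finset.mem_univ, true_and, Set.mem_ofPred_eq] at hp hq
  rw [root_add_root_mem_Phi_iff n (Fin.lt_def.2 (by omega)) (Fin.lt_def.2 (by omega)),
    Fin.ext_iff, Fin.ext_iff]
  omega

lemma ncard_PhiRad {k : ℕ} (hk : k < 2 * n + 1) : (PhiRad n k).ncard = (k + 1) * (2 * n - k) := by
  rw [PhiRad_eq_image_root, ncard_image_root n, card_radPairs n hk]
  simp only [radPairs, Finset.mem_filter, Finset.mem_univ, true_and, Fin.lt_def]
  omega

open scoped Classical in
noncomputable def rootPairs (R : Set (Fin (2 * n + 1) → ℤ)) :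
    Finset (Fin (2 * n + 1) × Fin (2 * n + 1)) :=
  Finset.univ.filter fun p => p.1 < p.2 ∧ root n p ∈ R

section RootPairs

variable {n} {R : Set (Fin (2 * n + 1) → ℤ)}

lemma mem_rootPairs {p : Fin (2 * n + 1) × Fin (2 * n + 1)} :
    p ∈ rootPairs n R ↔ p.1 < p.2 ∧ root n p ∈ R := by
  simp [rootPairs]

lemma image_root_rootPairs (hR : R ⊆ PhiPos n) : root n '' rootPairs n R = R := by
  ext x
  simp only [Set.mem_image, Finset.mem_coe, mem_rootPairs]
  refine ⟨fun ⟨p, ⟨_, hp⟩, hpx⟩ => hpx ▸ hp, fun hx => ?_⟩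
  obtain ⟨i, j, hij, rfl⟩ := hR hx
  exact ⟨(i, j), ⟨hij, hx⟩, rfl⟩

lemma rootPairs_snd_ne_fst (hR : R.Pairwise fun a b => a + b ∉ Phi n) :
    ∀ p ∈ rootPairs n R, ∀ q ∈ rootPairs n R, p.2 ≠ q.1 := by
  intro p hp q hq hpq
  rw [mem_rootPairs] at hp hq
  obtain rfl | hne := eq_or_ne p q
  · exact hp.1.ne' hpq
  · exact hR hp.2 hq.2 (fun h => hne ((root_injOn n).eq_iff hp.1.ne hq.1.ne |>.1 h))
      ((root_add_root_mem_Phi_iff n hp.1 hq.1).2 (Or.inl hpq))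

end RootPairs

/-- In type `A_{2n}` (`n ≥ 1`), the maximal cardinality of a set of pairwise commuting
positive roots is `n(n+1)`, and the sets attaining this maximum are exactly
`Φ^rad(n)` and `Φ^rad(n+1)` (Bourbaki numbering; indexed from `0` these are
`PhiRad (n-1)` and `PhiRad n`). -/
theorem max_commuting_sets (hn : 1 ≤ n) :
    ((PhiRad n (n - 1) ⊆ PhiPos n ∧ (PhiRad n (n - 1)).Pairwise fun a b => a + b ∉ Phi n) ∧
     (PhiRad n n ⊆ PhiPos n ∧ (PhiRad n n).Pairwise fun a b => a + b ∉ Phi n)) ∧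
    ∀ R ⊆ PhiPos n, (R.Pairwise fun a b => a + b ∉ Phi n) →
      R.ncard ≤ n * (n + 1) ∧
        (R.ncard = n * (n + 1) ↔ R = PhiRad n (n - 1) ∨ R = PhiRad n n) := by
  refine ⟨⟨⟨PhiRad_subset_PhiPos n _, pairwise_PhiRad n _⟩,
    ⟨PhiRad_subset_PhiPos n _, pairwise_PhiRad n _⟩⟩, fun R hR hcomm => ?_⟩
  have hlt : ∀ p ∈ rootPairs n R, p.1 < p.2 := fun p hp => (mem_rootPairs.1 hp).1
  have hchain := rootPairs_snd_ne_fst hcomm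
  have hcard : R.ncard = (rootPairs n R).card := by
    rw [← ncard_image_root n hlt, image_root_rootPairs hR]
  refine ⟨hcard ▸ card_le_of_snd_ne_fst n (Fintype.card_fin _) hchain, ⟨fun h => ?_, ?_⟩⟩
  · rcases eq_radPairs_of_card_eq n hn hlt hchain (hcard ▸ h) with hP | hP <;> [left; right] <;>
      rw [← image_root_rootPairs hR, hP, PhiRad_eq_image_root]
  · rintro (rfl | rfl)
    · rw [ncard_PhiRad n (by omega), Nat.sub_add_cancel hn, show 2 * n - (n - 1) = n + 1 by omega]
    · rw [ncard_PhiRad n (by omega), show 2 * n - n = n by omega, mul_comm]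

end TypeAEven
end

section
/- In the root system of type C_n (n ≥ 2), the maximal cardinality of a set of pairwise commuting positive roots is n(n+1)/2, and the unique set attaining this maximum is Φ^rad(n) = {ε_i + ε_j : 1 ≤ i ≤ j ≤ n}, the set of positive roots with nonzero coefficient on the long simple root α_n. -/
set_option autoImplicit false

namespace TypeC

variable (n : ℕ)

/-- The standard basis vector `ε i` of `ℝ^n` (with integer coordinates). -/
def eps (i : Fin n) : Fin n → ℤ := Pi.single i 1

/-- The root system of type `C_n`: `±ε_i ± ε_j` for `i < j` together with `±2ε_i`. -/
def Phi : Set (Fin n → ℤ) :=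
  {x | (∃ i j : Fin n, i ≠ j ∧
          (x = eps n i + eps n j ∨ x = eps n i - eps n j ∨ x = -(eps n i + eps n j))) ∨
       (∃ i : Fin n, x = (2 : ℤ) • eps n i ∨ x = -((2 : ℤ) • eps n i))}

/-- The positive roots: `ε_i + ε_j` and `ε_i − ε_j` for `i < j`, and `2ε_i`. -/
def PhiPos : Set (Fin n → ℤ) :=
  {x | (∃ i j : Fin n, i < j ∧ (x = eps n i + eps n j ∨ x = eps n i - eps n j)) ∨
       (∃ i : Fin n, x = (2 : ℤ) • eps n i)}

/-- `Φ^rad(n)`, the positive roots with nonzero coefficient on the long simple root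
`α_n = 2ε_n`: the set `{ε_i + ε_j : i ≤ j}`. -/
def PhiRad : Set (Fin n → ℤ) :=
  {x | ∃ i j : Fin n, i ≤ j ∧ x = eps n i + eps n j}

/-!
Taking absolute values coordinatewise sends every positive root into `Φ^rad`: it fixes
`ε_i + ε_j` and `2ε_i`, and sends `ε_i - ε_j` to `ε_i + ε_j`. Two distinct positive roots
with the same absolute value are therefore `ε_i + ε_j` and `ε_i - ε_j`, whose sum `2ε_i` is a
root; so `|·|` is injective on a commuting set `R`, and `|R| ≤ |Φ^rad| = n(n+1)/2`.
At equality `|·|` maps `R` onto `Φ^rad`, so `R` contains every `2ε_j`, and `2ε_j` does not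
commute with `ε_i - ε_j`. That `Φ^rad` itself is commutative is seen on coordinate sums:
they are at most `2` on roots and equal `2` on `Φ^rad`.
-/

section

variable {n}

lemma sum_eps (i : Fin n) : ∑ m, eps n i m = 1 := by simp [eps]

lemma eps_injective : Function.Injective (eps n) := by
  intro i j h
  by_contra hij
  simpa [eps, hij] using congrFun h i

lemma eps_add_eps_eq_iff {i j k l : Fin n} :
    eps n i + eps n j = eps n k + eps n l ↔ s(i, j) = s(k, l) := by
  refine ⟨fun h => ?_, fun h => ?_⟩
  · have hik : i = k ∨ i = l := by
      by_contra! hne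
      have hi := congrFun h i
      simp only [eps, Pi.add_apply, Pi.single_apply, if_pos, hne.1, hne.2] at hi
      split_ifs at hi <;> omega
    rcases hik with rfl | rfl
    · have hjl : eps n j = eps n l := add_left_cancel h
      rw [eps_injective hjl]
    · have hjk : eps n j = eps n k := add_left_cancel (h.trans (add_comm _ _))
      rw [eps_injective hjk, Sym2.eq_swap]
  · rcases Sym2.eq_iff.mp h with ⟨rfl, rfl⟩ | ⟨rfl, rfl⟩
    · rfl
    · exact add_comm _ _

lemma eps_add_eps_mem_Phi {i j : Fin n} (hij : i ≠ j) : eps n i + eps n j ∈ Phi n :=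
  Or.inl ⟨i, j, hij, Or.inl rfl⟩

lemma eps_add_self_mem_Phi (i : Fin n) : eps n i + eps n i ∈ Phi n :=
  Or.inr ⟨i, Or.inl (two_smul ℤ _).symm⟩

lemma sum_le_two_of_mem_Phi {x : Fin n → ℤ} (hx : x ∈ Phi n) : ∑ m, x m ≤ 2 := by
  rcases hx with ⟨i, j, -, rfl | rfl | rfl⟩ | ⟨i, rfl | rfl⟩ <;>
    simp [Finset.sum_add_distrib, Finset.sum_sub_distrib, sum_eps, ← Finset.mul_sum]

lemma add_not_mem_Phi_of_mem_phiRad {x y : Fin n → ℤ} (hx : x ∈ PhiRad n)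
    (hy : y ∈ PhiRad n) : x + y ∉ Phi n := by
  obtain ⟨i, j, -, rfl⟩ := hx
  obtain ⟨k, l, -, rfl⟩ := hy
  intro h
  have := sum_le_two_of_mem_Phi h
  simp [Finset.sum_add_distrib, sum_eps] at this

lemma phiRad_subset_phiPos : PhiRad n ⊆ PhiPos n := by
  rintro x ⟨i, j, hij, rfl⟩
  rcases hij.lt_or_eq with h | rfl
  · exact Or.inl ⟨i, j, h, Or.inl rfl⟩
  · exact Or.inr ⟨i, (two_smul ℤ _).symm⟩

lemma mem_phiRad_or_eq_eps_sub_eps {x : Fin n → ℤ} (hx : x ∈ PhiPos n) :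
    x ∈ PhiRad n ∨ ∃ i j, i < j ∧ x = eps n i - eps n j := by
  rcases hx with ⟨i, j, hij, rfl | rfl⟩ | ⟨i, rfl⟩
  · exact Or.inl ⟨i, j, hij.le, rfl⟩
  · exact Or.inr ⟨i, j, hij, rfl⟩
  · exact Or.inl ⟨i, i, le_rfl, two_smul ℤ _⟩

def sym2Root : Sym2 (Fin n) → (Fin n → ℤ) :=
  Sym2.lift ⟨fun i j => eps n i + eps n j, fun _ _ => add_comm _ _⟩

lemma sym2Root_injective : Function.Injective (sym2Root (n := n)) := by
  intro s t h
  induction s using Sym2.ind with | _ i j =>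
  induction t using Sym2.ind with | _ k l =>
  exact eps_add_eps_eq_iff.mp h

lemma range_sym2Root : Set.range (sym2Root (n := n)) = PhiRad n := by
  ext x
  constructor
  · rintro ⟨s, rfl⟩
    induction s using Sym2.ind with | _ i j =>
    rcases le_total i j with h | h
    · exact ⟨i, j, h, rfl⟩
    · exact ⟨j, i, h, add_comm _ _⟩
  · rintro ⟨i, j, -, rfl⟩
    exact ⟨s(i, j), rfl⟩

lemma phiRad_finite : (PhiRad n).Finite :=
  range_sym2Root (n := n) ▸ Set.finite_range _

lemma ncard_phiRad : (PhiRad n).ncard = n * (n + 1) / 2 := by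
  rw [← range_sym2Root, ← Set.image_univ, sym2Root_injective.injOn.ncard_image,
    Set.ncard_univ, Nat.card_eq_fintype_card, Sym2.card, Fintype.card_fin,
    Nat.choose_two_right, Nat.mul_comm]
  rfl

lemma abs_of_mem_phiRad {x : Fin n → ℤ} (hx : x ∈ PhiRad n) : |x| = x := by
  obtain ⟨i, j, -, rfl⟩ := hx
  exact abs_of_nonneg (add_nonneg (Pi.single_nonneg.mpr zero_le_one)
    (Pi.single_nonneg.mpr zero_le_one))

lemma abs_eps_sub_eps {i j : Fin n} (hij : i ≠ j) :
    |eps n i - eps n j| = eps n i + eps n j := by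
  ext k
  simp only [Pi.abs_apply, Pi.sub_apply, Pi.add_apply, eps, Pi.single_apply]
  split_ifs <;> simp_all

lemma abs_mem_phiRad {x : Fin n → ℤ} (hx : x ∈ PhiPos n) : |x| ∈ PhiRad n := by
  rcases mem_phiRad_or_eq_eps_sub_eps hx with hx | ⟨i, j, hij, rfl⟩
  · rwa [abs_of_mem_phiRad hx]
  · rw [abs_eps_sub_eps hij.ne]
    exact ⟨i, j, hij.le, rfl⟩

lemma eq_or_add_mem_Phi_of_abs_eq_of_mem_phiRad {x y : Fin n → ℤ} (hx : x ∈ PhiRad n)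
    (hy : y ∈ PhiPos n) (h : |x| = |y|) : x = y ∨ x + y ∈ Phi n := by
  rw [abs_of_mem_phiRad hx] at h
  rcases mem_phiRad_or_eq_eps_sub_eps hy with hy | ⟨i, j, hij, rfl⟩
  · exact Or.inl (h.trans (abs_of_mem_phiRad hy))
  · rw [abs_eps_sub_eps hij.ne] at h
    rw [h, add_add_sub_cancel]
    exact Or.inr (eps_add_self_mem_Phi i)

lemma eq_or_add_mem_Phi_of_abs_eq {x y : Fin n → ℤ} (hx : x ∈ PhiPos n) (hy : y ∈ PhiPos n)
    (h : |x| = |y|) : x = y ∨ x + y ∈ Phi n := by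
  rcases mem_phiRad_or_eq_eps_sub_eps hx with hx | ⟨i, j, hij, rfl⟩
  · exact eq_or_add_mem_Phi_of_abs_eq_of_mem_phiRad hx hy h
  rcases mem_phiRad_or_eq_eps_sub_eps hy with hy | ⟨k, l, hkl, rfl⟩
  · rw [eq_comm, add_comm]
    exact eq_or_add_mem_Phi_of_abs_eq_of_mem_phiRad hy (Or.inl ⟨i, j, hij, Or.inr rfl⟩) h.symm
  rw [abs_eps_sub_eps hij.ne, abs_eps_sub_eps hkl.ne, eps_add_eps_eq_iff, Sym2.eq_iff] at h
  rcases h with ⟨rfl, rfl⟩ | ⟨rfl, rfl⟩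
  · exact Or.inl rfl
  · exact absurd (hij.trans hkl) (lt_irrefl _)

lemma injOn_abs {R : Set (Fin n → ℤ)} (hR : R ⊆ PhiPos n)
    (hcomm : R.Pairwise fun a b => a + b ∉ Phi n) : Set.InjOn abs R := by
  intro x hx y hy h
  by_contra hne
  exact hcomm hx hy hne ((eq_or_add_mem_Phi_of_abs_eq (hR hx) (hR hy) h).resolve_left hne)

lemma eq_of_abs_eq_eps_add_self {y : Fin n → ℤ} {j : Fin n} (hy : y ∈ PhiPos n)
    (h : |y| = eps n j + eps n j) : y = eps n j + eps n j := by
  rcases mem_phiRad_or_eq_eps_sub_eps hy with hyrad | ⟨k, l, hkl, rfl⟩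
  · rwa [abs_of_mem_phiRad hyrad] at h
  · rw [abs_eps_sub_eps hkl.ne, eps_add_eps_eq_iff, Sym2.eq_iff] at h
    obtain ⟨rfl, rfl⟩ | ⟨rfl, rfl⟩ := h <;> exact absurd hkl (lt_irrefl _)

lemma subset_phiRad_of_image_abs {R : Set (Fin n → ℤ)} (hR : R ⊆ PhiPos n)
    (hcomm : R.Pairwise fun a b => a + b ∉ Phi n) (himg : abs '' R = PhiRad n) :
    R ⊆ PhiRad n := by
  intro x hx
  rcases mem_phiRad_or_eq_eps_sub_eps (hR hx) with hxrad | ⟨i, j, hij, rfl⟩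
  · exact hxrad
  exfalso
  obtain ⟨y, hy, hyabs⟩ : eps n j + eps n j ∈ abs '' R := himg ▸ ⟨j, j, le_rfl, rfl⟩
  have hy2 := eq_of_abs_eq_eps_add_self (hR hy) hyabs
  have hne : eps n i - eps n j ≠ y := by
    intro h
    rw [← h, abs_eps_sub_eps hij.ne, eps_add_eps_eq_iff, Sym2.eq_iff] at hyabs
    exact hij.ne (hyabs.elim And.left And.left)
  apply hcomm hx hy hne
  rw [hy2, sub_add_add_cancel]
  exact eps_add_eps_mem_Phi hij.ne

end

theorem phiRad_unique_max :
    (PhiRad n ⊆ PhiPos n ∧ (PhiRad n).Pairwise fun a b => a + b ∉ Phi n) ∧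
    (PhiRad n).ncard = n * (n + 1) / 2 ∧
    ∀ R ⊆ PhiPos n, (R.Pairwise fun a b => a + b ∉ Phi n) →
      R.ncard ≤ n * (n + 1) / 2 ∧ (R.ncard = n * (n + 1) / 2 → R = PhiRad n) := by
  refine ⟨⟨phiRad_subset_phiPos, fun x hx y hy _ => add_not_mem_Phi_of_mem_phiRad hx hy⟩,
    ncard_phiRad, fun R hR hcomm => ?_⟩
  have hinj := injOn_abs hR hcomm
  have hmaps : ∀ x ∈ R, |x| ∈ PhiRad n := fun x hx => abs_mem_phiRad (hR hx)
  rw [← ncard_phiRad]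
  refine ⟨Set.ncard_le_ncard_of_injOn abs hmaps hinj phiRad_finite, fun hcard => ?_⟩
  have himg : abs '' R = PhiRad n :=
    Set.eq_of_subset_of_ncard_le (Set.image_subset_iff.mpr hmaps)
      (by rw [hinj.ncard_image, hcard]) phiRad_finite
  exact Set.eq_of_subset_of_ncard_le (subset_phiRad_of_image_abs hR hcomm himg)
    hcard.ge phiRad_finite

end TypeC
end

section
/- In the root system of type D_n (n ≥ 4) with positive roots {ε_i ± ε_j : 1 ≤ i < j ≤ n}, if R ⊆ Φ^rad({α_1, α_2}) is an inclusion-maximal set of pairwise commuting roots containing ε_1 − ε_2, then R = Φ^rad(1) = {ε_1 ± ε_j : 2 ≤ j ≤ n}, which has 2n − 2 elements; if instead ε_1 − ε_2 ∉ R, then R consists of ε_1 + ε_2 together with exactly one root from each pair {ε_1 + ε_r, ε_2 − ε_r} and each pair {ε_1 − ε_r, ε_2 + ε_r} for 2 < r ≤ n, so |R| = 2n − 3. -/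
set_option autoImplicit false

namespace TypeD

variable (n : ℕ)

/-- The standard basis vector `ε i` of `ℝ^n` (with integer coordinates). -/
def eps (i : Fin n) : Fin n → ℤ := Pi.single i 1

/-- The root system of type `D_n`: the vectors `±ε_i ± ε_j` for `i ≠ j`. -/
def Phi : Set (Fin n → ℤ) :=
  {x | ∃ i j : Fin n, i ≠ j ∧
        (x = eps n i + eps n j ∨ x = eps n i - eps n j ∨ x = -(eps n i + eps n j))}

/-- `Φ^rad({α_1, α_2})`: the positive roots involving `ε_1` or `ε_2`
(indexed from `0`: the roots `ε_0 ± ε_j` for `j ≥ 1` and `ε_1 ± ε_j` for `j ≥ 2`). -/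
def PhiRad12 (h : 4 ≤ n) : Set (Fin n → ℤ) :=
  {x | ∃ j : Fin n,
        (1 ≤ j.val ∧ (x = eps n ⟨0, by omega⟩ + eps n j ∨ x = eps n ⟨0, by omega⟩ - eps n j)) ∨
        (2 ≤ j.val ∧ (x = eps n ⟨1, by omega⟩ + eps n j ∨ x = eps n ⟨1, by omega⟩ - eps n j))}

/-!
Two roots `x, y` of `Φ^rad({α_1, α_2})` fail to commute exactly when `x ⬝ᵥ y = -1`, and the
offending pairs are `ε₀ - ε₁` against every `ε₁ ± ε_j`, and the partner pairs
`{y, ε₀ + ε₁ - y}` with `y = ε₀ ± ε_r`, `r ≥ 2`. So if `ε₀ - ε₁ ∈ R`, then `R` avoids every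
`ε₁ ± ε_j`, and by maximality it contains all of `Φ^rad(1)`, whose roots commute pairwise since
their `ε₀`-coordinates add up to `2`. Otherwise `ε₀ + ε₁`, which commutes with everything, lies
in `R`, and `R` contains exactly one root of each partner pair; replacing every root of `R`
outside `Φ^rad(1)` by its partner is then a bijection from `R` onto `Φ^rad(1) \ {ε₀ - ε₁}`.
-/

open Matrix

section Roots

variable {n}

lemma eps_apply (i k : Fin n) : eps n i k = if k = i then 1 else 0 := Pi.single_apply i 1 k

lemma eps_injective : Function.Injective (eps n) := fun i j e => by
  simpa [eps_apply] using congrFun e i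

lemma eps_dotProduct_eps (i j : Fin n) : eps n i ⬝ᵥ eps n j = if i = j then 1 else 0 := by
  rw [eps, single_dotProduct, one_mul, eps_apply]

lemma eps_add_eps_mem_Phi {i j : Fin n} (hij : i ≠ j) : eps n i + eps n j ∈ Phi n :=
  ⟨i, j, hij, .inl rfl⟩

lemma eps_sub_eps_mem_Phi {i j : Fin n} (hij : i ≠ j) : eps n i - eps n j ∈ Phi n :=
  ⟨i, j, hij, .inr (.inl rfl)⟩

lemma apply_le_one_of_mem_Phi {x : Fin n → ℤ} (hx : x ∈ Phi n) (k : Fin n) : x k ≤ 1 := by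
  obtain ⟨i, j, hij, rfl | rfl | rfl⟩ := hx <;>
    simp only [Pi.add_apply, Pi.sub_apply, Pi.neg_apply, eps_apply] <;> split_ifs <;> omega

lemma dotProduct_self_of_mem_Phi {x : Fin n → ℤ} (hx : x ∈ Phi n) : x ⬝ᵥ x = 2 := by
  obtain ⟨i, j, hij, rfl | rfl | rfl⟩ := hx <;>
    simp [add_dotProduct, dotProduct_add, sub_dotProduct, dotProduct_sub, eps_dotProduct_eps,
      hij, hij.symm]

lemma zero_notMem_Phi : (0 : Fin n → ℤ) ∉ Phi n := fun h0 => by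
  simpa using dotProduct_self_of_mem_Phi h0

/-- Roots have norm `2`, and `(x + y) ⬝ᵥ (x + y) = 4 + 2 (x ⬝ᵥ y)`. -/
lemma add_notMem_Phi {x y : Fin n → ℤ} (hx : x ∈ Phi n) (hy : y ∈ Phi n) (hxy : x ⬝ᵥ y ≠ -1) :
    x + y ∉ Phi n := fun hxy' => by
  have := dotProduct_self_of_mem_Phi hxy'
  rw [add_dotProduct, dotProduct_add, dotProduct_add, dotProduct_self_of_mem_Phi hx,
    dotProduct_self_of_mem_Phi hy, dotProduct_comm y x] at this
  omega

end Roots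

section Rad

variable {n} (h : 4 ≤ n)

local notation "ε₀" => eps n ⟨0, by omega⟩
local notation "ε₁" => eps n ⟨1, by omega⟩

/-- `Φ^rad(1)`. -/
def PhiRad1 : Set (Fin n → ℤ) :=
  {x | ∃ j : Fin n, 1 ≤ j.val ∧ (x = ε₀ + eps n j ∨ x = ε₀ - eps n j)}

def partner (y : Fin n → ℤ) : Fin n → ℤ := ε₀ + ε₁ - y

lemma partner_partner (y : Fin n → ℤ) : partner h (partner h y) = y := sub_sub_cancel _ _

lemma add_partner (y : Fin n → ℤ) : y + partner h y = ε₀ + ε₁ := add_sub_cancel _ _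

lemma PhiRad1_subset_PhiRad12 : PhiRad1 h ⊆ PhiRad12 n h :=
  fun _ ⟨j, hj, hx⟩ => ⟨j, .inl ⟨hj, hx⟩⟩

lemma PhiRad12_subset_Phi : PhiRad12 n h ⊆ Phi n := by
  rintro x ⟨j, ⟨hj, rfl | rfl⟩ | ⟨hj, rfl | rfl⟩⟩
  all_goals first
    | exact eps_add_eps_mem_Phi (by simp [Fin.ext_iff]; omega)
    | exact eps_sub_eps_mem_Phi (by simp [Fin.ext_iff]; omega)

lemma eps_zero_sub_eps_one_mem_PhiRad1 : ε₀ - ε₁ ∈ PhiRad1 h :=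
  ⟨⟨1, by omega⟩, le_rfl, .inr rfl⟩

lemma apply_zero_of_mem_PhiRad1 {x : Fin n → ℤ} (hx : x ∈ PhiRad1 h) : x ⟨0, by omega⟩ = 1 := by
  obtain ⟨j, hj, rfl | rfl⟩ := hx <;> simp [eps_apply, Fin.ext_iff] <;> omega

lemma add_notMem_Phi_of_mem_PhiRad1 {x y : Fin n → ℤ} (hx : x ∈ PhiRad1 h)
    (hy : y ∈ PhiRad1 h) : x + y ∉ Phi n := fun hxy => by
  have := apply_le_one_of_mem_Phi hxy ⟨0, by omega⟩
  rw [Pi.add_apply, apply_zero_of_mem_PhiRad1 h hx, apply_zero_of_mem_PhiRad1 h hy] at this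
  omega

lemma partner_notMem_PhiRad1 {y : Fin n → ℤ} (hy : y ∈ PhiRad1 h) : partner h y ∉ PhiRad1 h :=
  fun hy' => by
    simpa [partner, apply_zero_of_mem_PhiRad1 h hy, eps_apply] using
      apply_zero_of_mem_PhiRad1 h hy'

lemma exists_eq_of_notMem_PhiRad1 {x : Fin n → ℤ} (hx : x ∈ PhiRad12 n h)
    (hx' : x ∉ PhiRad1 h) : ∃ j : Fin n, 2 ≤ j.val ∧ (x = ε₁ + eps n j ∨ x = ε₁ - eps n j) := by
  obtain ⟨j, hj | hj⟩ := hx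
  · exact absurd ⟨j, hj⟩ hx'
  · exact ⟨j, hj⟩

lemma add_sub_mem_Phi_of_notMem_PhiRad1 {x : Fin n → ℤ} (hx : x ∈ PhiRad12 n h)
    (hx' : x ∉ PhiRad1 h) : x + (ε₀ - ε₁) ∈ Phi n := by
  obtain ⟨j, hj, rfl | rfl⟩ := exists_eq_of_notMem_PhiRad1 h hx hx'
  · convert eps_add_eps_mem_Phi (i := ⟨0, by omega⟩) (j := j) (by simp [Fin.ext_iff]; omega)
      using 1
    abel
  · convert eps_sub_eps_mem_Phi (i := ⟨0, by omega⟩) (j := j) (by simp [Fin.ext_iff]; omega)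
      using 1
    abel

lemma partner_mem_of_notMem_PhiRad1 {x : Fin n → ℤ} (hx : x ∈ PhiRad12 n h)
    (hx' : x ∉ PhiRad1 h) : partner h x ∈ PhiRad1 h \ {ε₀ - ε₁} := by
  obtain ⟨j, hj, rfl | rfl⟩ := exists_eq_of_notMem_PhiRad1 h hx hx'
  · refine ⟨⟨j, by omega, .inr (by unfold partner; abel)⟩, fun e => ?_⟩
    have := congrFun e ⟨1, by omega⟩
    simp [partner, eps_apply, Fin.ext_iff] at this
    omega
  · refine ⟨⟨j, by omega, .inl (by unfold partner; abel)⟩, fun e => ?_⟩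
    have := congrFun e ⟨1, by omega⟩
    simp [partner, eps_apply, Fin.ext_iff] at this
    omega

lemma eq_partner_of_add_mem_Phi {x y : Fin n → ℤ} (hx : x ∈ PhiRad12 n h) (hy : y ∈ PhiRad1 h)
    (hy' : y ≠ ε₀ - ε₁) (hxy : x + y ∈ Phi n) : x = partner h y := by
  have hdot : x ⬝ᵥ y = -1 := by
    by_contra hne
    exact add_notMem_Phi (PhiRad12_subset_Phi h hx)
      (PhiRad12_subset_Phi h (PhiRad1_subset_PhiRad12 h hy)) hne hxy
  unfold partner
  obtain ⟨j, hj, rfl | rfl⟩ := hy <;>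
  obtain ⟨k, ⟨hk, rfl | rfl⟩ | ⟨hk, rfl | rfl⟩⟩ := hx <;>
    simp only [add_dotProduct, sub_dotProduct, dotProduct_add, dotProduct_sub,
      eps_dotProduct_eps] at hdot <;>
    split_ifs at hdot <;> subst_vars <;> simp only [Fin.ext_iff] at * <;>
    first | omega | exact absurd rfl hy' | abel

lemma ncard_PhiRad1 : (PhiRad1 h).ncard = 2 * n - 2 := by
  set J : Set (Fin n) := {⟨0, by omega⟩}ᶜ
  have hJ (j : Fin n) : j ∈ J ↔ 1 ≤ j.val := by
    simp only [J, Set.mem_compl_singleton_iff, ne_eq, Fin.ext_iff]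
    omega
  have hPhiRad1 : PhiRad1 h = (ε₀ + eps n ·) '' J ∪ (ε₀ - eps n ·) '' J := by
    ext x
    simp only [Set.mem_union, Set.mem_image, hJ]
    constructor
    · rintro ⟨j, hj, rfl | rfl⟩
      exacts [.inl ⟨j, hj, rfl⟩, .inr ⟨j, hj, rfl⟩]
    · rintro (⟨j, hj, rfl⟩ | ⟨j, hj, rfl⟩)
      exacts [⟨j, hj, .inl rfl⟩, ⟨j, hj, .inr rfl⟩]
  have hdisj : Disjoint ((ε₀ + eps n ·) '' J) ((ε₀ - eps n ·) '' J) := by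
    refine Set.disjoint_left.2 ?_
    rintro _ ⟨j, -, rfl⟩ ⟨k, -, e⟩
    have := congrFun e j
    simp only [Pi.add_apply, Pi.sub_apply, eps_apply] at this
    split_ifs at this <;> omega
  rw [hPhiRad1, Set.ncard_union_eq hdisj,
    Set.ncard_image_of_injective _ (fun _ _ e => eps_injective (add_left_cancel e)),
    Set.ncard_image_of_injective _ (fun _ _ e => eps_injective (sub_right_injective e)),
    Set.ncard_compl, Set.ncard_singleton, Nat.card_eq_fintype_card, Fintype.card_fin]
  omega

structure IsMaxCommuting (R : Set (Fin n → ℤ)) : Prop where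
  subset : R ⊆ PhiRad12 n h
  pairwise : R.Pairwise fun a b => a + b ∉ Phi n
  maximal : ∀ γ ∈ PhiRad12 n h, γ ∉ R → ¬ (insert γ R).Pairwise fun a b => a + b ∉ Phi n

namespace IsMaxCommuting

variable {h} {R : Set (Fin n → ℤ)}

lemma mem_of_forall (hR : IsMaxCommuting h R) {γ : Fin n → ℤ} (hγ : γ ∈ PhiRad12 n h)
    (hγR : ∀ b ∈ R, γ ≠ b → γ + b ∉ Phi n) : γ ∈ R := by
  by_contra hγ'
  refine hR.maximal γ hγ hγ' (Set.pairwise_insert.2 ⟨hR.pairwise, fun b hb hne => ?_⟩)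
  exact ⟨hγR b hb hne, by rw [add_comm]; exact hγR b hb hne⟩

lemma eq_PhiRad1 (hR : IsMaxCommuting h R) (h01 : ε₀ - ε₁ ∈ R) : R = PhiRad1 h := by
  have hsub : R ⊆ PhiRad1 h := fun x hx => by
    by_contra hx'
    exact hR.pairwise hx h01 (fun e => hx' (e ▸ eps_zero_sub_eps_one_mem_PhiRad1 h))
      (add_sub_mem_Phi_of_notMem_PhiRad1 h (hR.subset hx) hx')
  refine hsub.antisymm fun y hy => hR.mem_of_forall (PhiRad1_subset_PhiRad12 h hy) ?_
  exact fun b hb _ => add_notMem_Phi_of_mem_PhiRad1 h hy (hsub hb)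

lemma partner_notMem (hR : IsMaxCommuting h R) {y : Fin n → ℤ} (hy : y ∈ PhiRad1 h)
    (hyR : y ∈ R) : partner h y ∉ R := fun hyR' =>
  hR.pairwise hyR hyR' (fun e => partner_notMem_PhiRad1 h hy (e ▸ hy))
    (by rw [add_partner]; exact eps_add_eps_mem_Phi (by simp [Fin.ext_iff]))

lemma mem_of_partner_notMem (hR : IsMaxCommuting h R) {y : Fin n → ℤ} (hy : y ∈ PhiRad1 h)
    (hy' : y ≠ ε₀ - ε₁) (hyR : partner h y ∉ R) : y ∈ R :=
  hR.mem_of_forall (PhiRad1_subset_PhiRad12 h hy) fun b hb _ hyb =>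
    hyR (eq_partner_of_add_mem_Phi h (hR.subset hb) hy hy' (by rwa [add_comm]) ▸ hb)

lemma xor_mem_partner (hR : IsMaxCommuting h R) {y : Fin n → ℤ} (hy : y ∈ PhiRad1 h)
    (hy' : y ≠ ε₀ - ε₁) : Xor (y ∈ R) (partner h y ∈ R) := by
  by_cases hyR : y ∈ R
  · exact .inl ⟨hyR, hR.partner_notMem hy hyR⟩
  · exact .inr ⟨by_contra fun h' => hyR (hR.mem_of_partner_notMem hy hy' h'), hyR⟩

lemma add_mem (hR : IsMaxCommuting h R) : ε₀ + ε₁ ∈ R := by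
  refine hR.mem_of_partner_notMem ⟨⟨1, by omega⟩, le_rfl, .inl rfl⟩ (fun e => ?_) ?_
  · simpa [eps_apply, Fin.ext_iff] using congrFun e ⟨1, by omega⟩
  · rw [partner, sub_self]
    exact fun h0 => zero_notMem_Phi (PhiRad12_subset_Phi h (hR.subset h0))

lemma xor_mem_of_two_le (hR : IsMaxCommuting h R) {r : Fin n} (hr : 2 ≤ r.val) :
    Xor (ε₀ + eps n r ∈ R) (ε₁ - eps n r ∈ R) ∧ Xor (ε₀ - eps n r ∈ R) (ε₁ + eps n r ∈ R) := by
  have hne : ε₀ + eps n r ≠ ε₀ - ε₁ ∧ ε₀ - eps n r ≠ ε₀ - ε₁ := by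
    constructor <;> intro e <;> have := congrFun e ⟨1, by omega⟩ <;>
      simp [eps_apply, Fin.ext_iff] at this <;> omega
  constructor
  · simpa only [partner, add_sub_add_left_eq_sub] using
      hR.xor_mem_partner ⟨r, by omega, .inl rfl⟩ hne.1
  · simpa only [partner, add_sub_sub_cancel] using
      hR.xor_mem_partner ⟨r, by omega, .inr rfl⟩ hne.2

lemma ncard_eq_of_notMem (hR : IsMaxCommuting h R) (h01 : ε₀ - ε₁ ∉ R) :
    R.ncard = 2 * n - 3 := by
  classical
  let ψ : (Fin n → ℤ) → (Fin n → ℤ) := fun x => if x ∈ PhiRad1 h then x else partner h x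
  have hinj : Set.InjOn ψ R := by
    intro x hx y hy e
    by_cases hx1 : x ∈ PhiRad1 h <;> by_cases hy1 : y ∈ PhiRad1 h <;>
      simp only [ψ, hx1, hy1, if_true, if_false] at e
    · exact e
    · exact (hR.partner_notMem hx1 hx (by rwa [e, partner_partner])).elim
    · exact (hR.partner_notMem hy1 hy (by rwa [← e, partner_partner])).elim
    · exact sub_right_injective e
  have himage : ψ '' R = PhiRad1 h \ {ε₀ - ε₁} := by
    ext y
    constructor
    · rintro ⟨x, hx, rfl⟩
      by_cases hx1 : x ∈ PhiRad1 h
      · simp only [ψ, if_pos hx1]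
        exact ⟨hx1, fun e => h01 (e ▸ hx)⟩
      · simp only [ψ, if_neg hx1]
        exact partner_mem_of_notMem_PhiRad1 h (hR.subset hx) hx1
    · rintro ⟨hy, hy'⟩
      by_cases hyR : y ∈ R
      · exact ⟨y, hyR, if_pos hy⟩
      · refine ⟨partner h y, ((hR.xor_mem_partner hy hy').resolve_left (hyR ·.1)).1, ?_⟩
        simp only [ψ, if_neg (partner_notMem_PhiRad1 h hy), partner_partner]
  rw [← hinj.ncard_image, himage,
    Set.ncard_sdiff_singleton_of_mem (eps_zero_sub_eps_one_mem_PhiRad1 h), ncard_PhiRad1]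
  omega

end IsMaxCommuting

end Rad

/-- In type `D_n` (`n ≥ 4`): if `R ⊆ Φ^rad({α_1, α_2})` is an inclusion-maximal set of
pairwise commuting roots containing `ε_1 − ε_2`, then `R = Φ^rad(1) = {ε_1 ± ε_j : j ≥ 2}`
and `|R| = 2n − 2`; if instead `ε_1 − ε_2 ∉ R`, then `R` consists of `ε_1 + ε_2` together
with exactly one root from each pair `{ε_1 + ε_r, ε_2 − ε_r}` and each pair
`{ε_1 − ε_r, ε_2 + ε_r}` for `r > 2`, and `|R| = 2n − 3`. -/
theorem maxComm_in_phiRad12 (h : 4 ≤ n)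
    (R : Set (Fin n → ℤ)) (hR : R ⊆ PhiRad12 n h)
    (hcomm : R.Pairwise fun a b => a + b ∉ Phi n)
    (hmaxl : ∀ γ ∈ PhiRad12 n h, γ ∉ R → ¬ (insert γ R).Pairwise fun a b => a + b ∉ Phi n) :
    (eps n ⟨0, by omega⟩ - eps n ⟨1, by omega⟩ ∈ R →
      R = {x | ∃ j : Fin n, 1 ≤ j.val ∧
            (x = eps n ⟨0, by omega⟩ + eps n j ∨ x = eps n ⟨0, by omega⟩ - eps n j)} ∧
        R.ncard = 2 * n - 2) ∧
    (eps n ⟨0, by omega⟩ - eps n ⟨1, by omega⟩ ∉ R →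
      (eps n ⟨0, by omega⟩ + eps n ⟨1, by omega⟩ ∈ R ∧
       (∀ r : Fin n, 2 ≤ r.val →
          Xor' (eps n ⟨0, by omega⟩ + eps n r ∈ R) (eps n ⟨1, by omega⟩ - eps n r ∈ R) ∧
          Xor' (eps n ⟨0, by omega⟩ - eps n r ∈ R) (eps n ⟨1, by omega⟩ + eps n r ∈ R)) ∧
       R.ncard = 2 * n - 3)) := by
  have hRmax : IsMaxCommuting h R := ⟨hR, hcomm, hmaxl⟩
  refine ⟨fun h01 => ?_, fun h01 => ⟨hRmax.add_mem, fun r hr => hRmax.xor_mem_of_two_le hr,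
    hRmax.ncard_eq_of_notMem h01⟩⟩
  have hR1 := hRmax.eq_PhiRad1 h01
  exact ⟨hR1, hR1 ▸ ncard_PhiRad1 h⟩

end TypeD
end

section
/- In the root system of type F_4, among the 8 positive roots of the form ε_{ijk} = ½(ε_1 + iε_2 + jε_3 + kε_4) with i, j, k ∈ {±1}, two distinct such roots commute (their sum is not a root) if and only if the sign vectors (i,j,k) and (i′,j′,k′) differ in exactly one coordinate. Consequently, any set of pairwise commuting roots of F_4 contains at most 2 roots of this form. -/
set_option autoImplicit false

namespace TypeF4

/-- The standard basis vector `ε i` of `ℝ^4` (with rational coordinates). -/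
def eps (i : Fin 4) : Fin 4 → ℚ := Pi.single i 1

/-- A sign vector: every coordinate is `1` or `-1`. -/
def IsSign (s : Fin 4 → ℚ) : Prop := ∀ t, s t = 1 ∨ s t = -1

/-- The root system of type `F_4`: `±ε_i`, `±ε_i ± ε_j` (`i ≠ j`), and
`½(±ε_1 ± ε_2 ± ε_3 ± ε_4)`. -/
def Phi : Set (Fin 4 → ℚ) :=
  {x | (∃ i, x = eps i ∨ x = -eps i) ∨
       (∃ i j, i ≠ j ∧ (x = eps i + eps j ∨ x = eps i - eps j ∨ x = -(eps i + eps j))) ∨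
       (∃ s, IsSign s ∧ x = (1 / 2 : ℚ) • s)}

/-- The positive half-roots `ε_{ijk} = ½(ε_1 + iε_2 + jε_3 + kε_4)`. -/
def IsHalfRoot (x : Fin 4 → ℚ) : Prop :=
  ∃ s, IsSign s ∧ s 0 = 1 ∧ x = (1 / 2 : ℚ) • s

/-! Write `x = ½(s + s')`. Its coordinates are `s t` where `s` and `s'` agree and `0` where
they differ, so `x ⬝ᵥ x = 4 - d` with `d` the number of sign changes. Every root has squared
length `1` or `2`, so `d = 1` forces `x ∉ Φ`; since the first coordinates agree, otherwise
`d ∈ {2, 3}` and `x` is `ε₀` or `ε₀ ± εⱼ`. No three sign vectors are pairwise one sign change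
apart, because `(-1) ^ d(s, s') = ∏ t, s t * s' t` is multiplicative along `s, s', s''`. -/

open Finset Matrix

lemma eps_dotProduct_eps (i j : Fin 4) : eps i ⬝ᵥ eps j = if i = j then 1 else 0 := by
  simp [eps, Pi.single_apply, eq_comm]

lemma IsSign.mul_self {s : Fin 4 → ℚ} (hs : IsSign s) (t : Fin 4) : s t * s t = 1 := by
  rcases hs t with h | h <;> simp [h]

lemma dotProduct_self_of_mem_Phi {x : Fin 4 → ℚ} (hx : x ∈ Phi) :
    x ⬝ᵥ x = 1 ∨ x ⬝ᵥ x = 2 := by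
  rcases hx with ⟨i, rfl | rfl⟩ | ⟨i, j, hij, rfl | rfl | rfl⟩ | ⟨s, hs, rfl⟩
  · simp [eps_dotProduct_eps]
  · simp [eps_dotProduct_eps]
  · simp [add_dotProduct, dotProduct_add, eps_dotProduct_eps, hij, hij.symm]; norm_num
  · simp [sub_dotProduct, dotProduct_sub, eps_dotProduct_eps, hij, hij.symm]; norm_num
  · simp [add_dotProduct, dotProduct_add, eps_dotProduct_eps, hij, hij.symm]; norm_num
  · left
    rw [smul_dotProduct, dotProduct_smul]
    simp [dotProduct, hs.mul_self]
    norm_num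

def signChanges (s s' : Fin 4 → ℚ) : Finset (Fin 4) := {t | s t ≠ s' t}

lemma mem_signChanges {s s' : Fin 4 → ℚ} {t : Fin 4} :
    t ∈ signChanges s s' ↔ s t ≠ s' t := by
  simp [signChanges]

lemma ncard_setOf_ne (s s' : Fin 4 → ℚ) :
    {t | s t ≠ s' t}.ncard = #(signChanges s s') := by
  rw [Set.ncard_eq_toFinset_card', Set.toFinset_ofPred, signChanges]

lemma eq_univ_erase_zero_or_eq_erase_erase_zero (D : Finset (Fin 4)) (h0 : 0 ∉ D)
    (hD : 2 ≤ #D) : D = univ.erase 0 ∨ ∃ j ≠ 0, D = (univ.erase 0).erase j := by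
  revert D
  decide

lemma ncard_le_two_of_not_three_distinct {α : Type*} {S : Set α}
    (h : ∀ x ∈ S, ∀ y ∈ S, ∀ z ∈ S, x ≠ y → x ≠ z → y ≠ z → False) : S.ncard ≤ 2 := by
  by_cases hS : S.Finite
  · by_contra! h2
    obtain ⟨x, hx, y, hy, z, hz, hxy, hxz, hyz⟩ := (Set.two_lt_ncard hS).1 h2
    exact h x hx y hy z hz hxy hxz hyz
  · rw [Set.Infinite.ncard hS]
    omega

namespace IsSign

variable {s s' s'' : Fin 4 → ℚ}

lemma half_add_half_apply (hs : IsSign s) (hs' : IsSign s') (t : Fin 4) :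
    ((1 / 2 : ℚ) • s + (1 / 2 : ℚ) • s') t = if t ∈ signChanges s s' then 0 else s t := by
  rcases hs t with h | h <;> rcases hs' t with h' | h' <;> norm_num [mem_signChanges, h, h']

lemma dotProduct_self_half_add_half (hs : IsSign s) (hs' : IsSign s') :
    ((1 / 2 : ℚ) • s + (1 / 2 : ℚ) • s') ⬝ᵥ ((1 / 2 : ℚ) • s + (1 / 2 : ℚ) • s') =
      4 - #(signChanges s s') := by
  set x := (1 / 2 : ℚ) • s + (1 / 2 : ℚ) • s'
  have hsq (t : Fin 4) : x t * x t = 1 - if t ∈ signChanges s s' then 1 else 0 := by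
    rw [show x t = _ from hs.half_add_half_apply hs' t]
    split_ifs <;> simp [hs.mul_self]
  simp [dotProduct, hsq, sum_sub_distrib]

lemma prod_mul (hs : IsSign s) (hs' : IsSign s') :
    ∏ t, s t * s' t = (-1) ^ #(signChanges s s') := by
  have hmul (t : Fin 4) : s t * s' t = if t ∈ signChanges s s' then -1 else 1 := by
    rcases hs t with h | h <;> rcases hs' t with h' | h' <;> norm_num [mem_signChanges, h, h']
  simp only [hmul, prod_ite_mem, univ_inter, prod_const]

lemma neg_one_pow_card_signChanges_trans (hs : IsSign s) (hs' : IsSign s')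
    (hs'' : IsSign s'') :
    (-1 : ℚ) ^ #(signChanges s s'') =
      (-1) ^ #(signChanges s s') * (-1) ^ #(signChanges s' s'') := by
  rw [← hs.prod_mul hs'', ← hs.prod_mul hs', ← hs'.prod_mul hs'', ← prod_mul_distrib]
  refine prod_congr rfl fun t _ => ?_
  linear_combination -(s t * s'' t) * hs'.mul_self t

lemma card_signChanges_ne_one_of_eq_one (hs : IsSign s) (hs' : IsSign s')
    (hs'' : IsSign s'') (h : #(signChanges s s') = 1) (h' : #(signChanges s' s'') = 1) :
    #(signChanges s s'') ≠ 1 := by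
  intro h''
  have := hs.neg_one_pow_card_signChanges_trans hs' hs''
  rw [h, h', h''] at this
  norm_num at this

lemma half_add_half_eq_eps_zero (hs : IsSign s) (hs' : IsSign s') (h0 : s 0 = 1)
    (hD : signChanges s s' = univ.erase 0) : (1 / 2 : ℚ) • s + (1 / 2 : ℚ) • s' = eps 0 := by
  ext t
  rw [hs.half_add_half_apply hs', hD]
  by_cases ht : t = 0 <;> simp_all [eps]

lemma half_add_half_eq_eps_zero_add (hs : IsSign s) (hs' : IsSign s') (h0 : s 0 = 1)
    {j : Fin 4} (hj : j ≠ 0) (hD : signChanges s s' = (univ.erase 0).erase j) :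
    (1 / 2 : ℚ) • s + (1 / 2 : ℚ) • s' = eps 0 + s j • eps j := by
  ext t
  rw [hs.half_add_half_apply hs', hD]
  by_cases ht : t = 0 <;> by_cases htj : t = j <;> simp_all [eps]

lemma half_add_half_mem_Phi_iff (hs : IsSign s) (hs' : IsSign s') (h0 : s 0 = 1)
    (h0' : s' 0 = 1) (hne : s ≠ s') :
    (1 / 2 : ℚ) • s + (1 / 2 : ℚ) • s' ∈ Phi ↔ #(signChanges s s') ≠ 1 := by
  refine ⟨fun hx h1 => ?_, fun h1 => ?_⟩
  · have := dotProduct_self_of_mem_Phi hx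
    rw [hs.dotProduct_self_half_add_half hs', h1] at this
    norm_num at this
  · have hD0 : 0 ∉ signChanges s s' := by simp [mem_signChanges, h0, h0']
    have hD : 0 < #(signChanges s s') := by
      rw [card_pos, nonempty_iff_ne_empty]
      intro hD
      exact hne (funext fun t => by
        simpa [mem_signChanges] using eq_empty_iff_forall_notMem.1 hD t)
    rcases eq_univ_erase_zero_or_eq_erase_erase_zero _ hD0 (by omega) with hD | ⟨j, hj, hD⟩
    · rw [hs.half_add_half_eq_eps_zero hs' h0 hD]
      exact Or.inl ⟨0, Or.inl rfl⟩
    · rw [hs.half_add_half_eq_eps_zero_add hs' h0 hj hD]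
      refine Or.inr (Or.inl ⟨0, j, hj.symm, ?_⟩)
      rcases hs j with h | h
      · exact Or.inl (by simp [h])
      · exact Or.inr (Or.inl (by simp [h, sub_eq_add_neg]))

end IsSign

lemma not_three_commuting_halfRoots {x y z : Fin 4 → ℚ} (hx : IsHalfRoot x)
    (hy : IsHalfRoot y) (hz : IsHalfRoot z) (hxy : x ≠ y) (hxz : x ≠ z) (hyz : y ≠ z)
    (cxy : x + y ∉ Phi) (cxz : x + z ∉ Phi) (cyz : y + z ∉ Phi) : False := by
  obtain ⟨s, hs, hs0, rfl⟩ := hx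
  obtain ⟨s', hs', hs0', rfl⟩ := hy
  obtain ⟨s'', hs'', hs0'', rfl⟩ := hz
  have card_eq_one {a b : Fin 4 → ℚ} (ha : IsSign a) (hb : IsSign b) (ha0 : a 0 = 1)
      (hb0 : b 0 = 1) (hab : (1 / 2 : ℚ) • a ≠ (1 / 2 : ℚ) • b)
      (c : (1 / 2 : ℚ) • a + (1 / 2 : ℚ) • b ∉ Phi) : #(signChanges a b) = 1 := by
    by_contra h
    exact c ((ha.half_add_half_mem_Phi_iff hb ha0 hb0 fun e => hab (e ▸ rfl)).2 h)
  exact hs.card_signChanges_ne_one_of_eq_one hs' hs'' (card_eq_one hs hs' hs0 hs0' hxy cxy)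
    (card_eq_one hs' hs'' hs0' hs0'' hyz cyz) (card_eq_one hs hs'' hs0 hs0'' hxz cxz)

/-- In `F_4`, two distinct positive half-roots `ε_{ijk}`, `ε_{i'j'k'}` commute if and only
if their sign vectors differ in exactly one coordinate; consequently any set of pairwise
commuting roots contains at most two roots of this form. -/
theorem halfRoots_commute_iff_one_sign_change :
    (∀ s s' : Fin 4 → ℚ, IsSign s → IsSign s' → s 0 = 1 → s' 0 = 1 → s ≠ s' →
      (((1 / 2 : ℚ) • s + (1 / 2 : ℚ) • s' ∉ Phi) ↔ {t : Fin 4 | s t ≠ s' t}.ncard = 1)) ∧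
    ∀ R ⊆ Phi, (R.Pairwise fun a b => a + b ∉ Phi) →
      {x ∈ R | IsHalfRoot x}.ncard ≤ 2 := by
  refine ⟨fun s s' hs hs' h0 h0' hne => ?_, fun R _ hR => ?_⟩
  · rw [ncard_setOf_ne, hs.half_add_half_mem_Phi_iff hs' h0 h0' hne, not_not]
  · exact ncard_le_two_of_not_three_distinct fun x hx y hy z hz hxy hxz hyz =>
      not_three_commuting_halfRoots hx.2 hy.2 hz.2 hxy hxz hyz (hR hx.1 hy.1 hxy)
        (hR hx.1 hz.1 hxz) (hR hy.1 hz.1 hyz)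

end TypeF4
end

section
/- Let k be an algebraically closed field of characteristic 2 and let g = pgl_2(k) = gl_2(k)/(scalars) with its restricted Lie algebra structure. Then the set of 2-nilpotent elements of g (i.e., elements x with x^[2] = 0) is a 2-dimensional linear subspace of g, namely the image of the span of the matrices E_{12}, E_{21}, and the identity. -/
/-!
By Cayley–Hamilton a `2 × 2` matrix satisfies `x² = tr(x) • x - det(x) • 1`, so `x²` is scalar
iff `tr x = 0` or `x` is itself scalar; in characteristic `2` scalar matrices are traceless, so
the `2`-nilpotent elements of `pgl₂` are the images of the traceless matrices. In characteristic
`2` these are the matrices with equal diagonal entries, i.e. the span of `E₁₂`, `E₂₁` and `1`, a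
`3`-dimensional space containing the scalar line, whose image in `pgl₂` is therefore
`2`-dimensional.
-/

set_option autoImplicit false

open Module Matrix

namespace PGL2

variable (k : Type*) [Field k]

def scalars : Submodule k (Matrix (Fin 2) (Fin 2) k) :=
  Submodule.span k {(1 : Matrix (Fin 2) (Fin 2) k)}

section General

variable {R K V : Type*}

theorem mul_self_eq_trace_smul_sub_det_smul [CommRing R] [Nontrivial R]
    (A : Matrix (Fin 2) (Fin 2) R) : A * A = A.trace • A - A.det • 1 := by
  have h := aeval_self_charpoly A
  simp only [charpoly_fin_two, map_add, map_sub, map_mul, map_pow, Polynomial.aeval_X,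
    Polynomial.aeval_C, Algebra.algebraMap_eq_smul_one, smul_mul_assoc, one_mul] at h
  rw [← sq, eq_sub_iff_add_eq, ← sub_eq_zero, ← h]
  abel

theorem trace_fin_two_eq_zero_iff [CommRing R] [CharP R 2] (A : Matrix (Fin 2) (Fin 2) R) :
    A.trace = 0 ↔ A 0 0 = A 1 1 := by
  rw [trace_fin_two, CharTwo.add_eq_zero]

theorem mem_span_single_single_one_iff [CommRing R] (A : Matrix (Fin 2) (Fin 2) R) :
    A ∈ Submodule.span R {single 0 1 (1 : R), single 1 0 (1 : R), 1} ↔ A 0 0 = A 1 1 := by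
  constructor
  · intro hA
    refine Submodule.span_induction (p := fun B _ => B 0 0 = B 1 1) ?_ ?_ ?_ ?_ hA
    · rintro B (rfl | rfl | rfl) <;> simp
    · rfl
    · intro B C _ _ hB hC
      simp [hB, hC]
    · intro c B _ hB
      simp [hB]
  · intro hA
    have hdecomp : A = A 0 1 • single 0 1 (1 : R) + A 1 0 • single 1 0 1 + A 0 0 • 1 := by
      ext i j
      fin_cases i <;> fin_cases j <;> simp [one_apply, hA]
    rw [hdecomp]
    refine add_mem (add_mem ?_ ?_) ?_ <;>
      exact Submodule.smul_mem _ _ (Submodule.subset_span (by simp))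

theorem linearIndependent_single_single_one [CommRing R] [Nontrivial R] :
    LinearIndependent R ![single 0 1 (1 : R), single 1 0 1, (1 : Matrix (Fin 2) (Fin 2) R)] := by
  rw [Fintype.linearIndependent_iff]
  intro c hc i
  fin_cases i
  · simpa [Fin.sum_univ_three] using congr_fun₂ hc 0 1
  · simpa [Fin.sum_univ_three] using congr_fun₂ hc 1 0
  · simpa [Fin.sum_univ_three] using congr_fun₂ hc 0 0

theorem finrank_map_mkQ_add_finrank [DivisionRing K] [AddCommGroup V] [Module K V]
    [FiniteDimensional K V] {N S : Submodule K V} (hNS : N ≤ S) :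
    finrank K (S.map N.mkQ) + finrank K N = finrank K S := by
  let f := N.mkQ ∘ₗ S.subtype
  have hrange : LinearMap.range f = S.map N.mkQ := by
    rw [LinearMap.range_comp, Submodule.range_subtype]
  have hker : LinearMap.ker f = N.comap S.subtype := by
    rw [LinearMap.ker_comp, Submodule.ker_mkQ]
  rw [← hrange, ← (Submodule.comapSubtypeEquivOfLe hNS).finrank_eq, ← hker,
    LinearMap.finrank_range_add_finrank_ker]

theorem finrank_span_single_single_one [CommRing R] [Nontrivial R] :
    finrank R (Submodule.span R {single 0 1 (1 : R), single 1 0 1, (1 : Matrix (Fin 2) (Fin 2) R)})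
      = 3 := by
  have h := finrank_span_eq_card (linearIndependent_single_single_one (R := R))
  rwa [range_cons, range_cons, range_cons, range_empty, Set.union_empty, Set.singleton_union,
    Set.singleton_union, Fintype.card_fin] at h

end General

variable {k}

theorem mul_self_mem_scalars_iff [CharP k 2] (x : Matrix (Fin 2) (Fin 2) k) :
    x * x ∈ scalars k ↔ x.trace = 0 := by
  have hdet : x.det • 1 ∈ scalars k :=
    Submodule.smul_mem _ _ (Submodule.mem_span_singleton_self 1)
  constructor
  · intro hsq
    by_contra htr
    have hx : x ∈ scalars k := by
      rw [← Submodule.smul_mem_iff _ htr, ← sub_add_cancel (x.trace • x) (x.det • 1),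
        ← mul_self_eq_trace_smul_sub_det_smul]
      exact add_mem hsq hdet
    obtain ⟨c, rfl⟩ := Submodule.mem_span_singleton.mp hx
    simp [CharTwo.two_eq_zero] at htr
  · intro htr
    rw [mul_self_eq_trace_smul_sub_det_smul, htr, zero_smul, zero_sub]
    exact neg_mem hdet

variable (k)

theorem pgl2_char2_nilpotent_variety [CharP k 2] :
    (↑((Submodule.span k {Matrix.single 0 1 (1 : k),
          Matrix.single 1 0 (1 : k), (1 : Matrix (Fin 2) (Fin 2) k)}).map
        (scalars k).mkQ) :
        Set (Matrix (Fin 2) (Fin 2) k ⧸ scalars k)) =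
      (scalars k).mkQ '' {x : Matrix (Fin 2) (Fin 2) k | x * x ∈ scalars k} ∧
    Module.finrank k
      ((Submodule.span k {Matrix.single 0 1 (1 : k),
          Matrix.single 1 0 (1 : k), (1 : Matrix (Fin 2) (Fin 2) k)}).map
        (scalars k).mkQ) = 2 := by
  set S := Submodule.span k {single 0 1 (1 : k), single 1 0 1, (1 : Matrix (Fin 2) (Fin 2) k)}
  have hS : (S : Set (Matrix (Fin 2) (Fin 2) k)) = {x | x * x ∈ scalars k} :=
    Set.ext fun x => (mem_span_single_single_one_iff x).trans <|
      (trace_fin_two_eq_zero_iff x).symm.trans (mul_self_mem_scalars_iff x).symm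
  have hscalars : scalars k ≤ S := Submodule.span_mono (by simp)
  have hrank := finrank_map_mkQ_add_finrank hscalars
  have hscalars_rank : finrank k (scalars k) = 1 := finrank_span_singleton one_ne_zero
  rw [finrank_span_single_single_one, hscalars_rank] at hrank
  exact ⟨by rw [Submodule.map_coe, hS], by omega⟩

end PGL2
end

section
/- In the root system of type B_n with n ≥ 5, the sets S_t = {ε_t} ∪ {ε_i + ε_j : 1 ≤ i < j ≤ n} for 1 ≤ t ≤ n and S*_t = {ε_t} ∪ {ε_i + ε_j : 1 ≤ i < j < n} ∪ {ε_i − ε_n : 1 ≤ i < n} for 1 ≤ t < n are sets of pairwise commuting positive roots of cardinality n(n−1)/2 + 1. -/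
set_option autoImplicit false

namespace TypeB

variable (n : ℕ)

/-- The standard basis vector `ε i` of `ℝ^n` (with integer coordinates). -/
def eps (i : Fin n) : Fin n → ℤ := Pi.single i 1

/-- The root system of type `B_n`: `±ε_i` and `±ε_i ± ε_j` for `i ≠ j`. -/
def Phi : Set (Fin n → ℤ) :=
  {x | (∃ i : Fin n, x = eps n i ∨ x = -eps n i) ∨
       (∃ i j : Fin n, i ≠ j ∧
          (x = eps n i + eps n j ∨ x = eps n i - eps n j ∨ x = -(eps n i + eps n j)))}

/-- The positive roots: `ε_i`, and `ε_i ± ε_j` for `i < j`. -/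
def PhiPos : Set (Fin n → ℤ) :=
  {x | (∃ i : Fin n, x = eps n i) ∨
       (∃ i j : Fin n, i < j ∧ (x = eps n i + eps n j ∨ x = eps n i - eps n j))}

/-- `S_t = {ε_t} ∪ {ε_i + ε_j : i < j}`. -/
def S (t : Fin n) : Set (Fin n → ℤ) :=
  insert (eps n t) {x | ∃ i j : Fin n, i < j ∧ x = eps n i + eps n j}

/-- `S*_t = {ε_t} ∪ {ε_i + ε_j : i < j < n} ∪ {ε_i − ε_n : i < n}` (`ε_n` is the last
coordinate vector; indexed from `0` the conditions read `j.val < n - 1`, `i.val < n - 1`). -/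
def Sstar (hn : 5 ≤ n) (t : Fin n) : Set (Fin n → ℤ) :=
  insert (eps n t)
    ({x | ∃ i j : Fin n, i < j ∧ j.val < n - 1 ∧ x = eps n i + eps n j} ∪
     {x | ∃ i : Fin n, i.val < n - 1 ∧ x = eps n i - eps n ⟨n - 1, by omega⟩})

/-! The linear form `x ↦ ∑ x_k` is at most `2` on every root of `B_n`, while it is `1` on `ε_t`
and `2` on every `ε_i + ε_j`; hence two distinct members of `S_t` add up to a vector on which it
is at least `3`, which is not a root. The reflection `s_{ε_n}` fixes `ε_t` for `t < n`, fixes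
`ε_i + ε_j` for `j < n` and sends `ε_i + ε_n` to `ε_i − ε_n`, so it maps `S_t` bijectively onto
`S*_t`. The transported form `∑_{k<n} x_k − x_n` plays the same role for `S*_t`, and both sets
have `1 + (n choose 2)` elements. -/

section

variable {n}

lemma dotProduct_eps (w : Fin n → ℤ) (i : Fin n) : w ⬝ᵥ eps n i = w i := by
  simp [eps, dotProduct_single]

lemma eps_dotProduct (i : Fin n) (x : Fin n → ℤ) : eps n i ⬝ᵥ x = x i := by
  simp [eps, single_dotProduct]

lemma dotProduct_le_two_of_mem_Phi {w x : Fin n → ℤ} (hw : ∀ k, |w k| ≤ 1) (hx : x ∈ Phi n) :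
    w ⬝ᵥ x ≤ 2 := by
  have hw' := fun k => abs_le.mp (hw k)
  rcases hx with ⟨i, rfl | rfl⟩ | ⟨i, j, -, rfl | rfl | rfl⟩ <;>
    simp only [dotProduct_add, dotProduct_sub, dotProduct_neg, dotProduct_eps]
  all_goals first | linarith [hw' i] | linarith [hw' i, hw' j]

lemma pairwise_add_notMem_Phi_of_weight {w : Fin n → ℤ} (hw : ∀ k, |w k| ≤ 1)
    {A : Set (Fin n → ℤ)} {e : Fin n → ℤ} (hpos : ∀ x ∈ A, 1 ≤ w ⬝ᵥ x)
    (htwo : ∀ x ∈ A, x ≠ e → 2 ≤ w ⬝ᵥ x) :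
    A.Pairwise (fun a b => a + b ∉ Phi n) := by
  intro a ha b hb hab hroot
  have hle := dotProduct_le_two_of_mem_Phi hw hroot
  rw [dotProduct_add] at hle
  by_cases hae : a = e
  · subst hae
    linarith [hpos a ha, htwo b hb (Ne.symm hab)]
  · linarith [htwo a ha hae, hpos b hb]

lemma sum_eps_apply (s : Finset (Fin n)) (k : Fin n) :
    (∑ i ∈ s, eps n i) k = if k ∈ s then 1 else 0 := by
  simp [eps, Finset.sum_apply, Pi.single_apply]

lemma sum_eps_injective : Function.Injective (fun s : Finset (Fin n) => ∑ i ∈ s, eps n i) := by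
  intro s s' h
  ext k
  have hk := congrFun h k
  simp only [sum_eps_apply] at hk
  split_ifs at hk with hs hs' hs' <;> simp_all

lemma setOf_eps_add_eps :
    {x | ∃ i j : Fin n, i < j ∧ x = eps n i + eps n j} =
      (fun s : Finset (Fin n) => ∑ i ∈ s, eps n i) ''
        ↑((Finset.univ : Finset (Fin n)).powersetCard 2) := by
  ext x
  constructor
  · rintro ⟨i, j, hij, rfl⟩
    exact ⟨{i, j}, by simp [Finset.card_pair hij.ne], Finset.sum_pair hij.ne⟩
  · rintro ⟨s, hs, rfl⟩
    obtain ⟨i, j, hij, rfl⟩ := Finset.card_eq_two.mp (Finset.mem_powersetCard_univ.mp hs)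
    rcases hij.lt_or_gt with h | h
    · exact ⟨i, j, h, Finset.sum_pair hij⟩
    · exact ⟨j, i, h, (Finset.sum_pair hij).trans (add_comm _ _)⟩

lemma ncard_setOf_eps_add_eps :
    {x | ∃ i j : Fin n, i < j ∧ x = eps n i + eps n j}.ncard = n.choose 2 := by
  rw [setOf_eps_add_eps, Set.ncard_image_of_injective _ sum_eps_injective, Set.ncard_coe_finset,
    Finset.card_powersetCard, Finset.card_univ, Fintype.card_fin]

lemma S_subset_PhiPos (t : Fin n) : S n t ⊆ PhiPos n := by
  rintro x (rfl | ⟨i, j, hij, rfl⟩)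
  · exact Or.inl ⟨t, rfl⟩
  · exact Or.inr ⟨i, j, hij, Or.inl rfl⟩

lemma one_dotProduct_eps_add_eps (i j : Fin n) : (1 : Fin n → ℤ) ⬝ᵥ (eps n i + eps n j) = 2 := by
  rw [dotProduct_add, dotProduct_eps, dotProduct_eps]
  rfl

lemma one_le_dotProduct_of_mem_S {t : Fin n} {x : Fin n → ℤ} (hx : x ∈ S n t) :
    1 ≤ (1 : Fin n → ℤ) ⬝ᵥ x := by
  rcases hx with rfl | ⟨i, j, -, rfl⟩
  · rw [dotProduct_eps]; rfl
  · rw [one_dotProduct_eps_add_eps]; norm_num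

lemma two_le_dotProduct_of_mem_S {t : Fin n} {x : Fin n → ℤ} (hx : x ∈ S n t)
    (hxt : x ≠ eps n t) : 2 ≤ (1 : Fin n → ℤ) ⬝ᵥ x := by
  rcases hx with rfl | ⟨i, j, -, rfl⟩
  · exact absurd rfl hxt
  · rw [one_dotProduct_eps_add_eps]

lemma S_pairwise (t : Fin n) : (S n t).Pairwise (fun a b => a + b ∉ Phi n) :=
  pairwise_add_notMem_Phi_of_weight (by simp) (fun _ => one_le_dotProduct_of_mem_S)
    (fun _ => two_le_dotProduct_of_mem_S)

lemma ncard_S (t : Fin n) : (S n t).ncard = n * (n - 1) / 2 + 1 := by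
  have ht : eps n t ∉ {x | ∃ i j : Fin n, i < j ∧ x = eps n i + eps n j} := by
    rintro ⟨i, j, -, h⟩
    have h1 := congrArg ((1 : Fin n → ℤ) ⬝ᵥ ·) h
    norm_num [dotProduct_eps, one_dotProduct_eps_add_eps] at h1
  have hfin : {x | ∃ i j : Fin n, i < j ∧ x = eps n i + eps n j}.Finite := by
    rw [setOf_eps_add_eps]
    exact Set.toFinite _
  rw [S, Set.ncard_insert_of_notMem ht hfin, ncard_setOf_eps_add_eps, Nat.choose_two_right]

def reflect (k : Fin n) (x : Fin n → ℤ) : Fin n → ℤ := x - (2 * x k) • eps n k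

lemma reflect_apply (k i : Fin n) (x : Fin n → ℤ) :
    reflect k x i = if i = k then -x k else x i := by
  rw [reflect, Pi.sub_apply, Pi.smul_apply, smul_eq_mul, eps, Pi.single_apply]
  split_ifs with h
  · subst h
    ring
  · ring

lemma reflect_reflect (k : Fin n) (x : Fin n → ℤ) : reflect k (reflect k x) = x := by
  ext i
  by_cases h : i = k <;> simp [reflect_apply, h]

lemma reflect_injective (k : Fin n) : Function.Injective (reflect k) :=
  Function.LeftInverse.injective (reflect_reflect k)

lemma reflect_add (k : Fin n) (x y : Fin n → ℤ) :
    reflect k (x + y) = reflect k x + reflect k y := by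
  ext i
  simp only [reflect, Pi.add_apply, Pi.sub_apply, Pi.smul_apply, smul_eq_mul]
  ring

lemma reflect_eps_of_ne {k i : Fin n} (h : i ≠ k) : reflect k (eps n i) = eps n i := by
  ext j
  by_cases hj : j = k <;> simp [reflect_apply, hj, eps, Pi.single_apply, h.symm]

lemma reflect_eps_self (k : Fin n) : reflect k (eps n k) = -eps n k := by
  ext j
  by_cases hj : j = k <;> simp [reflect_apply, hj, eps]

lemma reflect_dotProduct_reflect (k : Fin n) (w x : Fin n → ℤ) :
    reflect k w ⬝ᵥ reflect k x = w ⬝ᵥ x := by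
  simp only [reflect, dotProduct_sub, sub_dotProduct, dotProduct_smul, smul_dotProduct,
    dotProduct_eps, eps_dotProduct, smul_eq_mul]
  rw [eps, Pi.single_eq_same]
  ring

section Sstar

variable (hn : 5 ≤ n)

def last : Fin n := ⟨n - 1, by omega⟩

lemma ne_last_iff {i : Fin n} : i ≠ last hn ↔ i.val < n - 1 := by
  rw [Ne, Fin.ext_iff, last]
  have := i.isLt
  dsimp only
  omega

lemma Sstar_eq_image_reflect {t : Fin n} (ht : t.val < n - 1) :
    Sstar n hn t = reflect (last hn) '' S n t := by
  have hreflect_pair {i j : Fin n} (hij : i < j) :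
      reflect (last hn) (eps n i + eps n j) =
        eps n i + reflect (last hn) (eps n j) := by
    rw [reflect_add, reflect_eps_of_ne ((ne_last_iff hn).mpr (by omega))]
  ext x
  constructor
  · rintro (rfl | ⟨i, j, hij, hj, rfl⟩ | ⟨i, hi, rfl⟩)
    · exact ⟨eps n t, Or.inl rfl, reflect_eps_of_ne ((ne_last_iff hn).mpr ht)⟩
    · refine ⟨eps n i + eps n j, Or.inr ⟨i, j, hij, rfl⟩, ?_⟩
      rw [hreflect_pair hij, reflect_eps_of_ne ((ne_last_iff hn).mpr hj)]
    · have hlt : i < last hn := Fin.mk_lt_mk.mpr hi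
      refine ⟨eps n i + eps n (last hn), Or.inr ⟨i, last hn, hlt, rfl⟩, ?_⟩
      rw [hreflect_pair hlt, reflect_eps_self, ← sub_eq_add_neg]
      rfl
  · rintro ⟨y, rfl | ⟨i, j, hij, rfl⟩, rfl⟩
    · exact Or.inl (reflect_eps_of_ne ((ne_last_iff hn).mpr ht))
    · rw [hreflect_pair hij]
      by_cases hj : j = last hn
      · subst hj
        refine Or.inr (Or.inr ⟨i, hij, ?_⟩)
        rw [reflect_eps_self, ← sub_eq_add_neg]
        rfl
      · exact Or.inr (Or.inl ⟨i, j, hij, (ne_last_iff hn).mp hj,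
          by rw [reflect_eps_of_ne hj]⟩)

lemma Sstar_subset_PhiPos (t : Fin n) : Sstar n hn t ⊆ PhiPos n := by
  rintro x (rfl | ⟨i, j, hij, -, rfl⟩ | ⟨i, hi, rfl⟩)
  · exact Or.inl ⟨t, rfl⟩
  · exact Or.inr ⟨i, j, hij, Or.inl rfl⟩
  · exact Or.inr ⟨i, _, Fin.mk_lt_mk.mpr hi, Or.inr rfl⟩

lemma Sstar_pairwise {t : Fin n} (ht : t.val < n - 1) :
    (Sstar n hn t).Pairwise (fun a b => a + b ∉ Phi n) := by
  rw [Sstar_eq_image_reflect hn ht]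
  refine pairwise_add_notMem_Phi_of_weight (w := reflect (last hn) 1) (e := eps n t) ?_ ?_ ?_
  · intro k
    rw [reflect_apply]
    split_ifs <;> simp
  · rintro _ ⟨y, hy, rfl⟩
    rw [reflect_dotProduct_reflect]
    exact one_le_dotProduct_of_mem_S hy
  · rintro _ ⟨y, hy, rfl⟩ hne
    rw [reflect_dotProduct_reflect]
    refine two_le_dotProduct_of_mem_S hy ?_
    rintro rfl
    exact hne (reflect_eps_of_ne ((ne_last_iff hn).mpr ht))

end Sstar

end

/-- In type `B_n` (`n ≥ 5`), the sets `S_t` (`1 ≤ t ≤ n`) and `S*_t` (`1 ≤ t < n`) are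
sets of pairwise commuting positive roots of cardinality `n(n−1)/2 + 1`. -/
theorem S_and_Sstar_commuting (hn : 5 ≤ n) :
    ∀ t : Fin n,
      (S n t ⊆ PhiPos n ∧ (S n t).Pairwise (fun a b => a + b ∉ Phi n) ∧
        (S n t).ncard = n * (n - 1) / 2 + 1) ∧
      (t.val < n - 1 →
        Sstar n hn t ⊆ PhiPos n ∧ (Sstar n hn t).Pairwise (fun a b => a + b ∉ Phi n) ∧
          (Sstar n hn t).ncard = n * (n - 1) / 2 + 1) := by
  intro t
  refine ⟨⟨S_subset_PhiPos t, S_pairwise t, ncard_S t⟩,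
    fun ht => ⟨Sstar_subset_PhiPos hn t, Sstar_pairwise hn ht, ?_⟩⟩
  rw [Sstar_eq_image_reflect hn ht, Set.ncard_image_of_injective _ (reflect_injective _), ncard_S]

end TypeB
end
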